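/- arXiv:1611.07228 — 5 statements merged into one kernel-verified Lean document; each statement's English description precedes it below -/
import Mathlib

section
/- Let p > d ≥ 2 be reals and let τ ≥ 0, β = p − d − 1 > 0. Then there exist dimensional constants c, C > 0 such that for all z ∈ ℝ: c / (|z|^{p−d+1} + τ^{(p−d+1)/β}) ≤ ∫_{ℝ^{d−1}} dξ / ((z² + |ξ|²)^{p/2} + τ^{p/β}) ≤ C / (|z|^{p−d+1} + τ^{(p−d+1)/β}). -/
open MeasureTheory

local notation "Sp" n => EuclideanSpace ℝ (Fin n)

lemma aux_scale (n : ℕ) (p a : ℝ) (ha : 0 < a) :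
    (∫ ξ : Sp n, (a + ‖ξ‖) ^ (-p)) =
      a ^ ((n : ℝ) - p) * ∫ ξ : Sp n, (1 + ‖ξ‖) ^ (-p) := by
  have h := Measure.integral_comp_inv_smul_of_nonneg (volume : Measure (Sp n))
    (fun ξ => (1 + ‖ξ‖) ^ (-p)) ha.le
  rw [finrank_euclideanSpace_fin] at h
  have key : ∀ ξ : Sp n, (1 + ‖a⁻¹ • ξ‖) ^ (-p) = a ^ p * (a + ‖ξ‖) ^ (-p) := by
    intro ξ
    have h1 : ‖a⁻¹ • ξ‖ = a⁻¹ * ‖ξ‖ := by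
      rw [norm_smul, Real.norm_eq_abs, abs_of_nonneg (inv_nonneg.2 ha.le)]
    have h2 : 1 + a⁻¹ * ‖ξ‖ = a⁻¹ * (a + ‖ξ‖) := by field_simp
    rw [h1, h2, Real.mul_rpow (inv_nonneg.2 ha.le) (by positivity),
      Real.inv_rpow ha.le, ← Real.rpow_neg ha.le, neg_neg]
  simp only [key, smul_eq_mul] at h
  rw [integral_const_mul] at h
  have hap : (a : ℝ) ^ p ≠ 0 := by positivity
  calc (∫ ξ : Sp n, (a + ‖ξ‖) ^ (-p))
      = (a ^ p)⁻¹ * (a ^ p * ∫ ξ : Sp n, (a + ‖ξ‖) ^ (-p)) := by field_simp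
    _ = (a ^ p)⁻¹ * ((a:ℝ) ^ n * ∫ ξ : Sp n, (1 + ‖ξ‖) ^ (-p)) := by rw [h]
    _ = (a ^ (-p) * a ^ ((n:ℕ):ℝ)) * ∫ ξ : Sp n, (1 + ‖ξ‖) ^ (-p) := by
        rw [← Real.rpow_natCast a n, ← Real.rpow_neg ha.le]; ring
    _ = a ^ ((n : ℝ) - p) * ∫ ξ : Sp n, (1 + ‖ξ‖) ^ (-p) := by
        rw [← Real.rpow_add ha, neg_add_eq_sub]

lemma aux_zero (n : ℕ) (p : ℝ) (hpn : (n : ℝ) ≠ p) :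
    (∫ ξ : Sp n, ‖ξ‖ ^ (-p)) = 0 := by
  have h := Measure.integral_comp_inv_smul_of_nonneg (volume : Measure (Sp n))
    (fun ξ => ‖ξ‖ ^ (-p)) (by norm_num : (0:ℝ) ≤ 2)
  rw [finrank_euclideanSpace_fin] at h
  have key : ∀ ξ : Sp n, ‖(2:ℝ)⁻¹ • ξ‖ ^ (-p) = (2:ℝ) ^ p * ‖ξ‖ ^ (-p) := by
    intro ξ
    have h1 : ‖(2:ℝ)⁻¹ • ξ‖ = (2:ℝ)⁻¹ * ‖ξ‖ := by
      rw [norm_smul, Real.norm_eq_abs]; norm_num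
    rw [h1, Real.mul_rpow (by norm_num) (norm_nonneg ξ),
      Real.inv_rpow (by norm_num), ← Real.rpow_neg (by norm_num), neg_neg]
  simp only [key, smul_eq_mul] at h
  rw [integral_const_mul] at h
  have hne : (2:ℝ) ^ p ≠ (2:ℝ) ^ n := by
    rw [← Real.rpow_natCast 2 n]
    rcases hpn.lt_or_gt with h' | h'
    · exact (((Real.rpow_lt_rpow_left_iff one_lt_two).2 h')).ne'
    · exact (((Real.rpow_lt_rpow_left_iff one_lt_two).2 h')).ne
  have h3 := sub_eq_zero_of_eq h
  rw [← sub_mul] at h3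
  rcases mul_eq_zero.1 h3 with h4 | h4
  · exact absurd (sub_eq_zero.1 h4) hne
  · exact h4


lemma aux_int (n : ℕ) (p : ℝ) (h : (n:ℝ) < p) :
    Integrable (fun ξ : Sp n => (1 + ‖ξ‖) ^ (-p)) := by
  apply integrable_one_add_norm
  rw [finrank_euclideanSpace_fin]; exact h

lemma aux_pos (n : ℕ) (p : ℝ) (h : (n:ℝ) < p) :
    0 < ∫ ξ : Sp n, (1 + ‖ξ‖) ^ (-p) := by
  refine (integral_pos_iff_support_of_nonneg (fun ξ => by positivity) (aux_int n p h)).2 ?_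
  have hs : Function.support (fun ξ : Sp n => (1 + ‖ξ‖) ^ (-p)) = Set.univ := by
    ext ξ
    simp only [Function.mem_support, Set.mem_univ, iff_true]
    positivity
  rw [hs]
  exact isOpen_univ.measure_pos volume ⟨0, trivial⟩

lemma aux_int_a (n : ℕ) (p a : ℝ) (h : (n:ℝ) < p) (ha : 0 < a) :
    Integrable (fun ξ : Sp n => (a + ‖ξ‖) ^ (-p)) := by
  have h1 : Integrable (fun ξ : Sp n => (1 + ‖a⁻¹ • ξ‖) ^ (-p)) :=
    (aux_int n p h).comp_smul (inv_ne_zero ha.ne')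
  have key : ∀ ξ : Sp n, (1 + ‖a⁻¹ • ξ‖) ^ (-p) = a ^ p * (a + ‖ξ‖) ^ (-p) := by
    intro ξ
    have h1 : ‖a⁻¹ • ξ‖ = a⁻¹ * ‖ξ‖ := by
      rw [norm_smul, Real.norm_eq_abs, abs_of_nonneg (inv_nonneg.2 ha.le)]
    have h2 : 1 + a⁻¹ * ‖ξ‖ = a⁻¹ * (a + ‖ξ‖) := by field_simp
    rw [h1, h2, Real.mul_rpow (inv_nonneg.2 ha.le) (by positivity),
      Real.inv_rpow ha.le, ← Real.rpow_neg ha.le, neg_neg]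
  simp only [key] at h1
  have h2 := h1.const_mul ((a:ℝ) ^ p)⁻¹
  simp only [← mul_assoc, inv_mul_cancel₀ (by positivity : (a:ℝ)^p ≠ 0), one_mul] at h2
  exact h2

lemma aux_sq (x p : ℝ) (hx : 0 ≤ x) : ((x ^ 2 : ℝ)) ^ (p / 2) = x ^ p := by
  rw [← Real.rpow_natCast x 2, ← Real.rpow_mul hx]
  norm_num
  rw [mul_div_cancel₀ p (two_ne_zero)]

lemma aux_sum3 (x y w q : ℝ) (hx : 0 ≤ x) (hy : 0 ≤ y) (hw : 0 ≤ w) (hq : 0 ≤ q) :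
    (x + y + w) ^ q ≤ 3 ^ q * (x ^ q + y ^ q + w ^ q) := by
  set m := max x (max y w) with hm
  have hxm : x ≤ m := le_max_left _ _
  have hym : y ≤ m := le_trans (le_max_left _ _) (le_max_right _ _)
  have hwm : w ≤ m := le_trans (le_max_right _ _) (le_max_right _ _)
  have hm0 : 0 ≤ m := le_trans hx hxm
  have h1 : (x + y + w) ^ q ≤ (3 * m) ^ q :=
    Real.rpow_le_rpow (by positivity) (by linarith) hq
  have h2 : (3 * m) ^ q = 3 ^ q * m ^ q := Real.mul_rpow (by norm_num) hm0
  have h4 : m ^ q ≤ x ^ q + y ^ q + w ^ q := by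
    have hx' := Real.rpow_nonneg hx q
    have hy' := Real.rpow_nonneg hy q
    have hw' := Real.rpow_nonneg hw q
    rcases max_choice x (max y w) with h | h
    · rw [hm, h]; linarith
    · rcases max_choice y w with h' | h' <;> rw [hm, h, h'] <;> linarith
  calc (x + y + w) ^ q ≤ 3 ^ q * m ^ q := by rw [← h2]; exact h1
    _ ≤ 3 ^ q * (x ^ q + y ^ q + w ^ q) := by
        have : (0:ℝ) ≤ 3 ^ q := Real.rpow_nonneg (by norm_num) q
        exact mul_le_mul_of_nonneg_left h4 this

lemma aux_sum2 (x y q : ℝ) (hx : 0 ≤ x) (hy : 0 ≤ y) (hq : 0 ≤ q) :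
    (x + y) ^ q ≤ 2 ^ q * (x ^ q + y ^ q) := by
  set m := max x y with hm
  have hxm : x ≤ m := le_max_left _ _
  have hym : y ≤ m := le_max_right _ _
  have hm0 : 0 ≤ m := le_trans hx hxm
  have h1 : (x + y) ^ q ≤ (2 * m) ^ q :=
    Real.rpow_le_rpow (by positivity) (by linarith) hq
  have h2 : (2 * m) ^ q = 2 ^ q * m ^ q := Real.mul_rpow (by norm_num) hm0
  have h4 : m ^ q ≤ x ^ q + y ^ q := by
    have hx' := Real.rpow_nonneg hx q
    have hy' := Real.rpow_nonneg hy q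
    rcases max_choice x y with h | h <;> rw [hm, h] <;> linarith
  calc (x + y) ^ q ≤ 2 ^ q * m ^ q := by rw [← h2]; exact h1
    _ ≤ 2 ^ q * (x ^ q + y ^ q) := by
        have : (0:ℝ) ≤ 2 ^ q := Real.rpow_nonneg (by norm_num) q
        exact mul_le_mul_of_nonneg_left h4 this

lemma aux_sum2' (x y q : ℝ) (hx : 0 ≤ x) (hy : 0 ≤ y) (hq : 0 ≤ q) :
    x ^ q + y ^ q ≤ 2 * (x + y) ^ q := by
  have h1 : x ^ q ≤ (x + y) ^ q := Real.rpow_le_rpow hx (by linarith) hq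
  have h2 : y ^ q ≤ (x + y) ^ q := Real.rpow_le_rpow hy (by linarith) hq
  linarith

lemma aux_alg1 (K t D : ℝ) : K / (2 * t) / D = 2⁻¹ * K * (t * D)⁻¹ := by
  rw [div_div, div_eq_mul_inv, mul_assoc, mul_inv, mul_inv]; ring

lemma aux_alg2 (t K D : ℝ) : 2 * t * (2 * D⁻¹ * K) = 4 * t * K / D := by
  rw [div_eq_mul_inv]; ring

set_option maxHeartbeats 2000000 in
theorem stmt_7 (d : ℕ) (hd : 2 ≤ d) (p : ℝ) (hp : (d : ℝ) < p) (τ : ℝ) (hτ : 0 ≤ τ)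
    (β : ℝ) (hβ : β = p - d - 1) (hβpos : 0 < β) :
    ∃ c C : ℝ, 0 < c ∧ 0 < C ∧ ∀ z : ℝ,
      c / (|z| ^ (p - d + 1) + τ ^ ((p - d + 1) / β)) ≤
        (∫ ξ : EuclideanSpace ℝ (Fin (d - 1)),
          1 / ((z ^ 2 + ‖ξ‖ ^ 2) ^ (p / 2) + τ ^ (p / β))) ∧
      (∫ ξ : EuclideanSpace ℝ (Fin (d - 1)),
          1 / ((z ^ 2 + ‖ξ‖ ^ 2) ^ (p / 2) + τ ^ (p / β))) ≤
        C / (|z| ^ (p - d + 1) + τ ^ ((p - d + 1) / β)) := by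
  have hd1 : 1 ≤ d := le_trans (by norm_num) hd
  have hd2 : (2:ℝ) ≤ (d:ℝ) := by exact_mod_cast hd
  have hncast : ((d - 1 : ℕ) : ℝ) = (d : ℝ) - 1 := by
    rw [Nat.cast_sub hd1, Nat.cast_one]
  have hnp : ((d - 1 : ℕ) : ℝ) < p := by rw [hncast]; linarith
  have hp0 : (0:ℝ) < p := by linarith
  set q : ℝ := p - (d:ℝ) + 1 with hqdef
  have hq1 : (1:ℝ) < q := by simp only [hqdef]; linarith
  have hq0 : (0:ℝ) < q := by linarith
  set K : ℝ := ∫ ξ : EuclideanSpace ℝ (Fin (d - 1)), (1 + ‖ξ‖) ^ (-p) with hKdef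
  have hK : 0 < K := aux_pos (d - 1) p hnp
  refine ⟨K / (2 * 2 ^ q), 4 * 3 ^ p * K, by positivity, by positivity, fun z => ?_⟩
  have hs0 : 0 ≤ τ ^ (1/β) := Real.rpow_nonneg hτ _
  set s : ℝ := τ ^ (1/β) with hsdef
  set a : ℝ := |z| + s with hadef
  have ha0 : 0 ≤ a := by have := abs_nonneg z; simp only [hadef]; linarith
  have hsp : s ^ p = τ ^ (p/β) := by
    rw [hsdef, ← Real.rpow_mul hτ, one_div_mul_eq_div]
  have hsq : s ^ q = τ ^ (q/β) := by
    rw [hsdef, ← Real.rpow_mul hτ, one_div_mul_eq_div]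
  by_cases haz : a = 0
  · -- degenerate case z = 0, τ = 0
    have hzabs : |z| = 0 := by
      have : |z| + s = 0 := haz
      have := abs_nonneg z
      linarith
    have hz : z = 0 := abs_eq_zero.1 hzabs
    have hsz : s = 0 := by
      have : |z| + s = 0 := haz
      linarith
    have hτ0 : τ = 0 := by
      by_contra h
      have hτp : 0 < τ := lt_of_le_of_ne hτ (Ne.symm h)
      have : 0 < s := Real.rpow_pos_of_pos hτp _
      linarith
    subst hz; subst hτ0
    have hpβ : p / β ≠ 0 := by positivity
    have hint : (∫ ξ : EuclideanSpace ℝ (Fin (d - 1)),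
        1 / (((0:ℝ) ^ 2 + ‖ξ‖ ^ 2) ^ (p / 2) + (0:ℝ) ^ (p / β))) = 0 := by
      have hpt : (fun ξ : EuclideanSpace ℝ (Fin (d - 1)) =>
          1 / (((0:ℝ) ^ 2 + ‖ξ‖ ^ 2) ^ (p / 2) + (0:ℝ) ^ (p / β))) =
          fun ξ => ‖ξ‖ ^ (-p) := by
        funext ξ
        rw [Real.zero_rpow hpβ, add_zero, zero_pow (two_ne_zero), zero_add,
          aux_sq ‖ξ‖ p (norm_nonneg ξ), Real.rpow_neg (norm_nonneg ξ), one_div]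
      rw [hpt]
      exact aux_zero (d - 1) p (ne_of_lt hnp)
    rw [hint, abs_zero, Real.zero_rpow (by positivity : q ≠ 0),
      Real.zero_rpow (by positivity : q / β ≠ 0), add_zero, div_zero, div_zero]
    exact ⟨le_refl 0, le_refl 0⟩
  · -- main case a > 0
    have hapos : 0 < a := lt_of_le_of_ne ha0 (Ne.symm haz)
    have hD : ∀ ξ : EuclideanSpace ℝ (Fin (d - 1)),
        0 < (z ^ 2 + ‖ξ‖ ^ 2) ^ (p / 2) + τ ^ (p / β) := by
      intro ξ
      rcases eq_or_ne z 0 with hz | hz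
      · have hτp : 0 < τ := by
          rcases lt_or_eq_of_le hτ with h | h
          · exact h
          · exfalso; apply haz
            rw [hadef, hsdef, hz, ← h, abs_zero,
              Real.zero_rpow (by positivity : 1/β ≠ 0), add_zero]
        have : 0 < τ ^ (p / β) := Real.rpow_pos_of_pos hτp _
        have h2 : 0 ≤ (z ^ 2 + ‖ξ‖ ^ 2) ^ (p / 2) := Real.rpow_nonneg (by positivity) _
        linarith
      · have h1 : 0 < z ^ 2 + ‖ξ‖ ^ 2 := by positivity
        have h2 : 0 < (z ^ 2 + ‖ξ‖ ^ 2) ^ (p / 2) := Real.rpow_pos_of_pos h1 _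
        have h3 : 0 ≤ τ ^ (p / β) := Real.rpow_nonneg hτ _
        linarith
    -- pointwise comparisons
    have key1 : ∀ ξ : EuclideanSpace ℝ (Fin (d - 1)),
        (z ^ 2 + ‖ξ‖ ^ 2) ^ (p / 2) + τ ^ (p / β) ≤ 2 * (a + ‖ξ‖) ^ p := by
      intro ξ
      have hzA : |z| ≤ a := by simp only [hadef]; linarith
      have hsA : s ≤ a + ‖ξ‖ := by
        have := abs_nonneg z; have := norm_nonneg ξ; simp only [hadef]; linarith
      have e1 : (z ^ 2 + ‖ξ‖ ^ 2) ^ (p / 2) ≤ (a + ‖ξ‖) ^ p := by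
        have h1 : z ^ 2 + ‖ξ‖ ^ 2 ≤ (a + ‖ξ‖) ^ 2 := by
          have hz2 : z ^ 2 ≤ a ^ 2 := by
            rw [← sq_abs z]
            exact pow_le_pow_left₀ (abs_nonneg z) hzA 2
          nlinarith [mul_nonneg ha0 (norm_nonneg ξ)]
        calc (z ^ 2 + ‖ξ‖ ^ 2) ^ (p / 2) ≤ ((a + ‖ξ‖) ^ 2) ^ (p / 2) :=
              Real.rpow_le_rpow (by positivity) h1 (by positivity)
          _ = (a + ‖ξ‖) ^ p := aux_sq _ _ (by positivity)
      have e2 : τ ^ (p / β) ≤ (a + ‖ξ‖) ^ p := by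
        rw [← hsp]
        exact Real.rpow_le_rpow hs0 hsA hp0.le
      linarith
    have key2 : ∀ ξ : EuclideanSpace ℝ (Fin (d - 1)),
        (a + ‖ξ‖) ^ p ≤ 2 * 3 ^ p * ((z ^ 2 + ‖ξ‖ ^ 2) ^ (p / 2) + τ ^ (p / β)) := by
      intro ξ
      have h3 := aux_sum3 |z| s ‖ξ‖ p (abs_nonneg z) hs0 (norm_nonneg ξ) hp0.le
      have e1 : |z| ^ p ≤ (z ^ 2 + ‖ξ‖ ^ 2) ^ (p / 2) := by
        rw [← aux_sq |z| p (abs_nonneg z)]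
        apply Real.rpow_le_rpow (by positivity) ?_ (by positivity)
        rw [sq_abs]
        linarith [sq_nonneg ‖ξ‖]
      have e2 : ‖ξ‖ ^ p ≤ (z ^ 2 + ‖ξ‖ ^ 2) ^ (p / 2) := by
        rw [← aux_sq ‖ξ‖ p (norm_nonneg ξ)]
        apply Real.rpow_le_rpow (by positivity) ?_ (by positivity)
        linarith [sq_nonneg z]
      have e4 : |z| ^ p + s ^ p + ‖ξ‖ ^ p ≤
          2 * ((z ^ 2 + ‖ξ‖ ^ 2) ^ (p / 2) + τ ^ (p / β)) := by
        rw [hsp]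
        have := Real.rpow_nonneg hτ (p / β)
        linarith
      have h30 : (0:ℝ) ≤ 3 ^ p := Real.rpow_nonneg (by norm_num) p
      calc (a + ‖ξ‖) ^ p = (|z| + s + ‖ξ‖) ^ p := by rw [hadef]
        _ ≤ 3 ^ p * (|z| ^ p + s ^ p + ‖ξ‖ ^ p) := h3
        _ ≤ 3 ^ p * (2 * ((z ^ 2 + ‖ξ‖ ^ 2) ^ (p / 2) + τ ^ (p / β))) :=
            mul_le_mul_of_nonneg_left e4 h30
        _ = 2 * 3 ^ p * ((z ^ 2 + ‖ξ‖ ^ 2) ^ (p / 2) + τ ^ (p / β)) := by ring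
    have hlb : ∀ ξ : EuclideanSpace ℝ (Fin (d - 1)),
        2⁻¹ * (a + ‖ξ‖) ^ (-p) ≤ 1 / ((z ^ 2 + ‖ξ‖ ^ 2) ^ (p / 2) + τ ^ (p / β)) := by
      intro ξ
      have hX : (0:ℝ) < a + ‖ξ‖ := by have := norm_nonneg ξ; linarith
      have hXp : (0:ℝ) < (a + ‖ξ‖) ^ p := Real.rpow_pos_of_pos hX p
      rw [Real.rpow_neg hX.le, le_div_iff₀ (hD ξ)]
      calc 2⁻¹ * ((a + ‖ξ‖) ^ p)⁻¹ * ((z ^ 2 + ‖ξ‖ ^ 2) ^ (p / 2) + τ ^ (p / β)) ≤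
            2⁻¹ * ((a + ‖ξ‖) ^ p)⁻¹ * (2 * (a + ‖ξ‖) ^ p) := by
              apply mul_le_mul_of_nonneg_left (key1 ξ) (by positivity)
        _ = 1 := by field_simp
    have hub : ∀ ξ : EuclideanSpace ℝ (Fin (d - 1)),
        1 / ((z ^ 2 + ‖ξ‖ ^ 2) ^ (p / 2) + τ ^ (p / β)) ≤
          2 * 3 ^ p * (a + ‖ξ‖) ^ (-p) := by
      intro ξ
      have hX : (0:ℝ) < a + ‖ξ‖ := by have := norm_nonneg ξ; linarith
      have hXp : (0:ℝ) < (a + ‖ξ‖) ^ p := Real.rpow_pos_of_pos hX p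
      rw [Real.rpow_neg hX.le, div_le_iff₀ (hD ξ)]
      calc (1:ℝ) = (a + ‖ξ‖) ^ p * ((a + ‖ξ‖) ^ p)⁻¹ := (mul_inv_cancel₀ hXp.ne').symm
        _ ≤ (2 * 3 ^ p * ((z ^ 2 + ‖ξ‖ ^ 2) ^ (p / 2) + τ ^ (p / β))) *
              ((a + ‖ξ‖) ^ p)⁻¹ :=
            mul_le_mul_of_nonneg_right (key2 ξ) (by positivity)
        _ = 2 * 3 ^ p * ((a + ‖ξ‖) ^ p)⁻¹ *
              ((z ^ 2 + ‖ξ‖ ^ 2) ^ (p / 2) + τ ^ (p / β)) := by ring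
    -- integrability
    have hga : Integrable (fun ξ : EuclideanSpace ℝ (Fin (d - 1)) => (a + ‖ξ‖) ^ (-p)) :=
      aux_int_a (d - 1) p a hnp hapos
    have hcont : Continuous (fun ξ : EuclideanSpace ℝ (Fin (d - 1)) =>
        1 / ((z ^ 2 + ‖ξ‖ ^ 2) ^ (p / 2) + τ ^ (p / β))) := by
      apply Continuous.div continuous_const
      · apply Continuous.add ?_ continuous_const
        apply Continuous.rpow_const
        · exact continuous_const.add (continuous_norm.pow 2)
        · intro ξ; right; positivity
      · intro ξ; exact (hD ξ).ne'
    have hfnn : ∀ ξ : EuclideanSpace ℝ (Fin (d - 1)),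
        0 ≤ 1 / ((z ^ 2 + ‖ξ‖ ^ 2) ^ (p / 2) + τ ^ (p / β)) := fun ξ => le_of_lt (by
      exact div_pos one_pos (hD ξ))
    have hfi : Integrable (fun ξ : EuclideanSpace ℝ (Fin (d - 1)) =>
        1 / ((z ^ 2 + ‖ξ‖ ^ 2) ^ (p / 2) + τ ^ (p / β))) := by
      apply (hga.const_mul (2 * 3 ^ p)).mono' hcont.aestronglyMeasurable
      filter_upwards with ξ
      rw [Real.norm_eq_abs, abs_of_nonneg (hfnn ξ)]
      exact hub ξ
    -- integral comparisons
    have hIl : (∫ ξ : EuclideanSpace ℝ (Fin (d - 1)), 2⁻¹ * (a + ‖ξ‖) ^ (-p)) ≤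
        ∫ ξ : EuclideanSpace ℝ (Fin (d - 1)),
          1 / ((z ^ 2 + ‖ξ‖ ^ 2) ^ (p / 2) + τ ^ (p / β)) :=
      integral_mono (hga.const_mul 2⁻¹) hfi hlb
    have hIu : (∫ ξ : EuclideanSpace ℝ (Fin (d - 1)),
          1 / ((z ^ 2 + ‖ξ‖ ^ 2) ^ (p / 2) + τ ^ (p / β))) ≤
        ∫ ξ : EuclideanSpace ℝ (Fin (d - 1)), 2 * 3 ^ p * (a + ‖ξ‖) ^ (-p) :=
      integral_mono hfi (hga.const_mul (2 * 3 ^ p)) hub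
    rw [integral_const_mul] at hIl hIu
    have hJ : (∫ ξ : EuclideanSpace ℝ (Fin (d - 1)), (a + ‖ξ‖) ^ (-p)) = (a ^ q)⁻¹ * K := by
      rw [aux_scale (d - 1) p a hapos, ← hKdef]
      congr 1
      rw [show ((d - 1 : ℕ) : ℝ) - p = -q by rw [hncast, hqdef]; ring,
        Real.rpow_neg hapos.le]
    rw [hJ] at hIl hIu
    -- denominators
    have haq : 0 < a ^ q := Real.rpow_pos_of_pos hapos q
    have h2q : (0:ℝ) < 2 ^ q := Real.rpow_pos_of_pos two_pos q
    have hD1 : a ^ q ≤ 2 ^ q * (|z| ^ q + τ ^ (q / β)) := by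
      rw [← hsq]
      exact aux_sum2 |z| s q (abs_nonneg z) hs0 hq0.le
    have hD2 : |z| ^ q + τ ^ (q / β) ≤ 2 * a ^ q := by
      rw [← hsq]
      exact aux_sum2' |z| s q (abs_nonneg z) hs0 hq0.le
    have hD0pos : 0 < |z| ^ q + τ ^ (q / β) := by nlinarith
    constructor
    · refine le_trans ?_ hIl
      have h5 : (2 ^ q * (|z| ^ q + τ ^ (q / β)))⁻¹ ≤ (a ^ q)⁻¹ := by
        apply inv_anti₀ haq hD1
      calc K / (2 * 2 ^ q) / (|z| ^ q + τ ^ (q / β)) =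
            2⁻¹ * K * (2 ^ q * (|z| ^ q + τ ^ (q / β)))⁻¹ := aux_alg1 _ _ _
        _ ≤ 2⁻¹ * K * (a ^ q)⁻¹ := by
              apply mul_le_mul_of_nonneg_left h5 (by positivity)
        _ = 2⁻¹ * ((a ^ q)⁻¹ * K) := by ring
    · refine le_trans hIu ?_
      have h6 : (a ^ q)⁻¹ ≤ 2 * (|z| ^ q + τ ^ (q / β))⁻¹ := by
        rw [← mul_inv_cancel₀ (ne_of_gt hD0pos)] at *
        have h7 : (2 * a ^ q)⁻¹ ≤ (|z| ^ q + τ ^ (q / β))⁻¹ :=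
          inv_anti₀ hD0pos hD2
        calc (a ^ q)⁻¹ = 2 * (2 * a ^ q)⁻¹ := by field_simp
          _ ≤ 2 * (|z| ^ q + τ ^ (q / β))⁻¹ := by linarith
      calc 2 * 3 ^ p * ((a ^ q)⁻¹ * K) ≤
            2 * 3 ^ p * ((2 * (|z| ^ q + τ ^ (q / β))⁻¹) * K) := by
              apply mul_le_mul_of_nonneg_left ?_ (by positivity)
              exact mul_le_mul_of_nonneg_right h6 hK.le
        _ = 4 * 3 ^ p * K / (|z| ^ q + τ ^ (q / β)) := aux_alg2 _ _ _
end

section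
/- Let E ⊆ ℝ be L-periodic with E ∩ [0,L) a finite union of N disjoint open intervals (s_i, t_i), i = 1,…,N, with 0 < s₁ < t₁ < s₂ < ⋯ < t_N < L. For z ≥ 0, ∫_0^L |χ_E(x) − χ_E(x+z)| dx ≤ ∑_{i=1}^N [ min(z, t_i − s_i) + min(z, s_{i+1} − t_i) ], where s_{N+1} := s₁ + L. -/
open MeasureTheory Set

theorem stmt_12 (L : ℝ) (hL : 0 < L) (E : Set ℝ) (N : ℕ) (hN : 1 ≤ N)
    (s t : ℕ → ℝ)
    (hper : ∀ x : ℝ, x ∈ E ↔ x + L ∈ E)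
    (hs0 : 0 < s 0)
    (hst : ∀ i < N, s i < t i)
    (hts : ∀ i < N, t i < s (i + 1))
    (hsN : s N = s 0 + L)
    (htN : t (N - 1) < L)
    (hE : E ∩ Ico 0 L = ⋃ i ∈ Finset.range N, Ioo (s i) (t i))
    (z : ℝ) (hz : 0 ≤ z) :
    (∫ x in Ico 0 L, |E.indicator (fun _ => (1 : ℝ)) x - E.indicator (fun _ => (1 : ℝ)) (x + z)|) ≤
      ∑ i ∈ Finset.range N, (min z (t i - s i) + min z (s (i + 1) - t i)) := by
  set g : ℝ → ℝ := fun x => |E.indicator (fun _ => (1:ℝ)) x - E.indicator (fun _ => (1:ℝ)) (x + z)|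
    with hgdef
  -- ordering facts
  have hchain : ∀ j, j ≤ N → ∀ i, i < j → t i < s j := by
    intro j
    induction j with
    | zero => intro _ i hi; omega
    | succ n ih =>
      intro hn i hi
      have hnN : n < N := hn
      rcases Nat.lt_succ_iff_lt_or_eq.mp hi with h | h
      · calc t i < s n := ih (le_of_lt hnN) i h
          _ < t n := hst n hnN
          _ < s (n+1) := hts n hnN
      · subst h; exact hts i hnN
  have hs_lt : ∀ i j, i < j → j ≤ N → s i < s j := fun i j hij hj =>
    lt_trans (hst i (lt_of_lt_of_le hij hj)) (hchain j hj i hij)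
  have hs_le : ∀ i j, i ≤ j → j ≤ N → s i ≤ s j := by
    intro i j hij hj
    rcases eq_or_lt_of_le hij with rfl | h
    · exact le_refl _
    · exact (hs_lt i j h hj).le
  have ht_lt_L : ∀ i, i < N → t i < L := by
    intro i hi
    rcases Nat.lt_or_ge i (N-1) with h | h
    · calc t i < s (N-1) := hchain (N-1) (by omega) i h
        _ < t (N-1) := hst (N-1) (by omega)
        _ < L := htN
    · have : i = N - 1 := by omega
      subst this; exact htN
  have hs0L : s 0 < L := lt_trans (hst 0 hN) (ht_lt_L 0 hN)
  -- union membership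
  have hU : ∀ x : ℝ, (x ∈ ⋃ i ∈ Finset.range N, Ioo (s i) (t i)) ↔
      ∃ i, i < N ∧ x ∈ Ioo (s i) (t i) := by
    intro x
    simp only [mem_iUnion, Finset.mem_range, exists_prop]
  -- periodicity for integer multiples
  have hperZ : ∀ (m : ℤ) (x : ℝ), x ∈ E ↔ x + m * L ∈ E := by
    intro m
    induction m using Int.induction_on with
    | zero => simp
    | succ k ih =>
      intro x
      have h1 : x + ((k : ℤ) + 1 : ℤ) * L = (x + (k : ℤ) * L) + L := by push_cast; ring
      rw [h1]
      exact (ih x).trans (hper _)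
    | pred k ih =>
      intro x
      have h2 := hper (x + (-(k : ℤ) - 1 : ℤ) * L)
      have h3 : x + (-(k : ℤ) - 1 : ℤ) * L + L = x + (-(k : ℤ) : ℤ) * L := by push_cast; ring
      rw [h3] at h2
      exact (ih x).trans h2.symm
  have hfrac : ∀ y : ℝ, ∃ m : ℤ, y - m * L ∈ Ico 0 L := by
    intro y
    refine ⟨⌊y / L⌋, ?_, ?_⟩
    · have h1 : (⌊y / L⌋ : ℝ) * L ≤ y := by
        rw [← le_div_iff₀ hL]; exact Int.floor_le _
      linarith
    · have h2 : y < ((⌊y / L⌋ : ℝ) + 1) * L := by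
        rw [← div_lt_iff₀ hL]; exact Int.lt_floor_add_one _
      linarith
  -- E is measurable
  have hSmeas : MeasurableSet (E ∩ Ico 0 L) := by
    rw [hE]
    exact (Finset.range N).measurableSet_biUnion (fun i _ => measurableSet_Ioo)
  have hEmem : ∀ y : ℝ, y ∈ E ↔ ∃ m : ℤ, y - m * L ∈ E ∩ Ico 0 L := by
    intro y
    constructor
    · intro hy
      obtain ⟨m, hm⟩ := hfrac y
      refine ⟨m, ?_, hm⟩
      have := hperZ m (y - m * L)
      have h4 : y - m * L + m * L = y := by ring
      rw [h4] at this
      exact this.mpr hy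
    · rintro ⟨m, hm, _⟩
      have := hperZ m (y - m * L)
      have h4 : y - m * L + m * L = y := by ring
      rw [h4] at this
      exact this.mp hm
  have hEmeas : MeasurableSet E := by
    have hset : E = ⋃ m : ℤ, (fun y => y - m * L) ⁻¹' (E ∩ Ico 0 L) := by
      ext y
      simp only [mem_iUnion, mem_preimage]
      exact hEmem y
    rw [hset]
    exact MeasurableSet.iUnion fun m => hSmeas.preimage (measurable_id.sub_const _)
  -- measurability and boundedness of g
  have hind : Measurable (E.indicator (fun _ => (1:ℝ))) := measurable_const.indicator hEmeas
  have hgm : Measurable g := (hind.sub (hind.comp (measurable_add_const z))).abs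
  have h01 : ∀ y : ℝ, E.indicator (fun _ => (1:ℝ)) y = 0 ∨ E.indicator (fun _ => (1:ℝ)) y = 1 := by
    intro y; by_cases h : y ∈ E <;> simp [h]
  have hgbd : ∀ x, ‖g x‖ ≤ 1 := by
    intro x
    rcases h01 x with h1 | h1 <;> rcases h01 (x+z) with h2 | h2 <;>
      simp [hgdef, h1, h2]
  -- periodicity of g
  have hindper : ∀ x : ℝ, E.indicator (fun _ => (1:ℝ)) (x + L) = E.indicator (fun _ => (1:ℝ)) x := by
    intro x
    by_cases h : x ∈ E
    · rw [indicator_of_mem ((hper x).mp h) , indicator_of_mem h]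
    · rw [indicator_of_notMem (fun hc => h ((hper x).mpr hc)), indicator_of_notMem h]
  have hgper : Function.Periodic g L := by
    intro x
    simp only [hgdef]
    rw [show x + L + z = (x + z) + L by ring, hindper, hindper]
  -- shift integral to Ioc (s 0) (s N)
  have hIco : (∫ x in Ico 0 L, g x) = ∫ x in Ioc (s 0) (s N), g x := by
    rw [integral_Ico_eq_integral_Ioo, ← integral_Ioc_eq_integral_Ioo,
      ← intervalIntegral.integral_of_le hL.le]
    have h2 := hgper.intervalIntegral_add_eq 0 (s 0)
    rw [zero_add] at h2
    rw [h2, intervalIntegral.integral_of_le (by linarith), hsN]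
  -- bounding sets
  set A : ℕ → Set ℝ := fun i => Icc (max (s i) (t i - z)) (t i) with hA
  set B : ℕ → Set ℝ := fun i => Icc (max (t i) (s (i+1) - z)) (s (i+1)) with hB
  set f : ℝ → ℝ := fun x =>
    ∑ i ∈ Finset.range N, ((A i).indicator (fun _ => (1:ℝ)) x + (B i).indicator (fun _ => (1:ℝ)) x)
    with hf
  -- membership characterization on (s 0, s N]
  have hEiff : ∀ x : ℝ, s 0 < x → x ≤ s N → (x ∈ E ↔ ∃ i, i < N ∧ x ∈ Ioo (s i) (t i)) := by
    intro x hx1 hx2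
    by_cases hxL : x < L
    · have hx0 : (0:ℝ) < x := lt_trans hs0 hx1
      constructor
      · intro hxE
        have hmem : x ∈ E ∩ Ico 0 L := ⟨hxE, hx0.le, hxL⟩
        rw [hE] at hmem
        exact (hU x).mp hmem
      · rintro ⟨i, hi, hxi⟩
        have hmem : x ∈ E ∩ Ico 0 L := by
          rw [hE]; exact (hU x).mpr ⟨i, hi, hxi⟩
        exact hmem.1
    · push_neg at hxL
      have hx2' : x ≤ s 0 + L := by rw [hsN] at hx2; exact hx2
      constructor
      · intro hxE
        exfalso
        have hxL' : x - L ∈ E := by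
          have := hper (x - L)
          have h4 : x - L + L = x := by ring
          rw [h4] at this
          exact this.mpr hxE
        have hmem : x - L ∈ E ∩ Ico 0 L := ⟨hxL', by constructor <;> linarith⟩
        rw [hE] at hmem
        obtain ⟨i, hi, h1, h2⟩ := (hU _).mp hmem
        have h5 : s 0 ≤ s i := hs_le 0 i (Nat.zero_le i) hi.le
        linarith
      · rintro ⟨i, hi, h1, h2⟩
        exfalso
        have := ht_lt_L i hi
        linarith
  -- global localization of points of E
  have hEglob : ∀ y : ℝ, 0 ≤ y → y ∈ E →
      ∃ i : ℕ, ∃ m : ℤ, i < N ∧ 0 ≤ m ∧ s i + m * L < y ∧ y < t i + m * L := by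
    intro y hy hyE
    obtain ⟨m, hm1, hm2⟩ := hfrac y
    have hmE : y - m * L ∈ E := by
      have := hperZ m (y - m * L)
      have h4 : y - m * L + m * L = y := by ring
      rw [h4] at this
      exact this.mpr hyE
    have hmem : y - m * L ∈ E ∩ Ico 0 L := ⟨hmE, hm1, hm2⟩
    rw [hE] at hmem
    obtain ⟨i, hi, h1, h2⟩ := (hU _).mp hmem
    have hm0 : 0 ≤ m := by
      by_contra hneg
      push_neg at hneg
      have : (m : ℝ) ≤ -1 := by exact_mod_cast (by omega : m ≤ -1)
      nlinarith
    exact ⟨i, m, hi, hm0, by linarith, by linarith⟩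
  -- partition of (s 0, s N]
  have hpart : ∀ n, n ≤ N → ∀ x : ℝ, s 0 < x → x ≤ s n →
      (∃ i, i < n ∧ x ∈ Ioo (s i) (t i)) ∨ (∃ i, i < n ∧ x ∈ Icc (t i) (s (i+1))) := by
    intro n
    induction n with
    | zero => intro _ x h1 h2; exact absurd h2 (not_le.mpr h1)
    | succ n ih =>
      intro hn x h1 h2
      by_cases hxs : x ≤ s n
      · rcases ih (by omega) x h1 hxs with ⟨i, hi, h⟩ | ⟨i, hi, h⟩
        · exact Or.inl ⟨i, by omega, h⟩
        · exact Or.inr ⟨i, by omega, h⟩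
      · push_neg at hxs
        by_cases hxt : x < t n
        · exact Or.inl ⟨n, by omega, hxs, hxt⟩
        · push_neg at hxt
          exact Or.inr ⟨n, by omega, hxt, h2⟩
  -- pointwise bound
  have hfnn : ∀ x, 0 ≤ f x := by
    intro x
    apply Finset.sum_nonneg
    intro i _
    exact add_nonneg (indicator_nonneg (by intro a _; norm_num) x)
      (indicator_nonneg (by intro a _; norm_num) x)
  have hpt : ∀ x ∈ Ioc (s 0) (s N), g x ≤ f x := by
    rintro x ⟨hx1, hx2⟩
    by_cases hxE : x ∈ E <;> by_cases hxzE : x + z ∈ E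
    · simp [hgdef, indicator_of_mem hxE, indicator_of_mem hxzE, hfnn x]
    · -- x ∈ E, x + z ∉ E : x lands in some A i
      obtain ⟨i, hi, hsi, hti⟩ := (hEiff x hx1 hx2).mp hxE
      have hxA : x ∈ A i := by
        have htle : t i ≤ x + z := by
          by_contra hc
          push_neg at hc
          have htiL : t i < L := ht_lt_L i hi
          have hxzN : x + z ≤ s N := by rw [hsN]; linarith
          exact hxzE ((hEiff (x+z) (by linarith) hxzN).mpr ⟨i, hi, by linarith, hc⟩)
        exact ⟨max_le hsi.le (by linarith), hti.le⟩
      have hg1 : g x = 1 := by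
        simp [hgdef, indicator_of_mem hxE, indicator_of_notMem hxzE]
      rw [hg1, hf]
      calc (1:ℝ) = (A i).indicator (fun _ => (1:ℝ)) x := by rw [indicator_of_mem hxA]
        _ ≤ (A i).indicator (fun _ => (1:ℝ)) x + (B i).indicator (fun _ => (1:ℝ)) x := by
            have := indicator_nonneg (s := B i) (f := fun _ => (1:ℝ)) (by intro a _; norm_num) x
            linarith
        _ ≤ _ := Finset.single_le_sum
            (f := fun i => (A i).indicator (fun _ => (1:ℝ)) x + (B i).indicator (fun _ => (1:ℝ)) x)
            (fun j _ => add_nonneg (indicator_nonneg (by intro a _; norm_num) x)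
              (indicator_nonneg (by intro a _; norm_num) x)) (Finset.mem_range.mpr hi)
    · -- x ∉ E, x + z ∈ E : x lands in some B i
      rcases hpart N (le_refl N) x hx1 hx2 with ⟨i, hi, h⟩ | ⟨i, hi, hti, hsi⟩
      · exact absurd ((hEiff x hx1 hx2).mpr ⟨i, hi, h⟩) hxE
      have hxz0 : (0:ℝ) ≤ x + z := by linarith
      obtain ⟨j, m, hj, hm0, hjm1, hjm2⟩ := hEglob (x + z) hxz0 hxzE
      have hkey : s (i+1) < x + z := by
        rcases eq_or_lt_of_le hm0 with hm | hm
        · -- m = 0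
          rw [← hm] at hjm1 hjm2
          push_cast at hjm1 hjm2
          rw [zero_mul, add_zero] at hjm1 hjm2
          have hij : i < j := by
            by_contra hc
            push_neg at hc
            have htji : t j ≤ t i := by
              rcases eq_or_lt_of_le hc with rfl | hc'
              · exact le_refl _
              · exact le_trans (hchain i hi.le j hc').le (hst i hi).le
            linarith
          have : s (i+1) ≤ s j := hs_le (i+1) j hij hj.le
          linarith
        · -- m ≥ 1
          have hm1 : (1:ℝ) ≤ (m:ℝ) := by exact_mod_cast hm
          have hsj : s 0 ≤ s j := hs_le 0 j (Nat.zero_le j) hj.le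
          have hsiN : s (i+1) ≤ s N := hs_le (i+1) N hi N.le_refl
          rw [hsN] at hsiN
          nlinarith
      have hxB : x ∈ B i := ⟨max_le hti (by linarith), hsi⟩
      have hg1 : g x = 1 := by
        simp [hgdef, indicator_of_notMem hxE, indicator_of_mem hxzE]
      rw [hg1, hf]
      calc (1:ℝ) = (B i).indicator (fun _ => (1:ℝ)) x := by rw [indicator_of_mem hxB]
        _ ≤ (A i).indicator (fun _ => (1:ℝ)) x + (B i).indicator (fun _ => (1:ℝ)) x := by
            have := indicator_nonneg (s := A i) (f := fun _ => (1:ℝ)) (by intro a _; norm_num) x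
            linarith
        _ ≤ _ := Finset.single_le_sum
            (f := fun i => (A i).indicator (fun _ => (1:ℝ)) x + (B i).indicator (fun _ => (1:ℝ)) x)
            (fun j _ => add_nonneg (indicator_nonneg (by intro a _; norm_num) x)
              (indicator_nonneg (by intro a _; norm_num) x)) (Finset.mem_range.mpr hi)
    · simp [hgdef, indicator_of_notMem hxE, indicator_of_notMem hxzE, hfnn x]
  -- integrability
  have hgint : IntegrableOn g (Ioc (s 0) (s N)) := by
    have hc : IntegrableOn (fun _ => (1:ℝ)) (Ioc (s 0) (s N)) :=
      (integrableOn_const_iff).mpr (Or.inr measure_Ioc_lt_top)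
    exact Integrable.mono' hc hgm.aestronglyMeasurable.restrict (ae_of_all _ hgbd)
  have hAint : ∀ i, Integrable ((A i).indicator (fun _ => (1:ℝ))) := by
    intro i
    rw [integrable_indicator_iff measurableSet_Icc]
    exact (integrableOn_const_iff).mpr (Or.inr measure_Icc_lt_top)
  have hBint : ∀ i, Integrable ((B i).indicator (fun _ => (1:ℝ))) := by
    intro i
    rw [integrable_indicator_iff measurableSet_Icc]
    exact (integrableOn_const_iff).mpr (Or.inr measure_Icc_lt_top)
  have hfint : Integrable f := by
    rw [hf]
    exact integrable_finset_sum _ (fun i _ => (hAint i).add (hBint i))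
  -- length helper
  have hlen : ∀ a b : ℝ, a ≤ b → b - max a (b - z) = min z (b - a) := by
    intro a b hab
    rcases le_total a (b - z) with h | h
    · rw [max_eq_right h, min_eq_left (by linarith)]; ring
    · rw [max_eq_left h, min_eq_right (by linarith)]
  -- bound indicator integrals
  have hAbd : ∀ i, i < N → (∫ x in Ioc (s 0) (s N), (A i).indicator (fun _ => (1:ℝ)) x)
      ≤ min z (t i - s i) := by
    intro i hi
    have h1 : (∫ x in Ioc (s 0) (s N), (A i).indicator (fun _ => (1:ℝ)) x)
        ≤ ∫ x, (A i).indicator (fun _ => (1:ℝ)) x :=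
      setIntegral_le_integral (hAint i) (ae_of_all _ (indicator_nonneg (by intro a _; norm_num)))
    have h2 : (∫ x, (A i).indicator (fun _ => (1:ℝ)) x) = (volume (A i)).toReal • (1:ℝ) :=
      integral_indicator_const (1:ℝ) measurableSet_Icc
    have hmaxle : max (s i) (t i - z) ≤ t i := max_le (hst i hi).le (by linarith)
    rw [h2, smul_eq_mul, mul_one, hA] at h1
    rw [Real.volume_Icc, ENNReal.toReal_ofReal (by linarith)] at h1
    rw [hlen (s i) (t i) (hst i hi).le] at h1
    exact h1
  have hBbd : ∀ i, i < N → (∫ x in Ioc (s 0) (s N), (B i).indicator (fun _ => (1:ℝ)) x)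
      ≤ min z (s (i+1) - t i) := by
    intro i hi
    have h1 : (∫ x in Ioc (s 0) (s N), (B i).indicator (fun _ => (1:ℝ)) x)
        ≤ ∫ x, (B i).indicator (fun _ => (1:ℝ)) x :=
      setIntegral_le_integral (hBint i) (ae_of_all _ (indicator_nonneg (by intro a _; norm_num)))
    have h2 : (∫ x, (B i).indicator (fun _ => (1:ℝ)) x) = (volume (B i)).toReal • (1:ℝ) :=
      integral_indicator_const (1:ℝ) measurableSet_Icc
    have hmaxle : max (t i) (s (i+1) - z) ≤ s (i+1) := max_le (hts i hi).le (by linarith)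
    rw [h2, smul_eq_mul, mul_one, hB] at h1
    rw [Real.volume_Icc, ENNReal.toReal_ofReal (by linarith)] at h1
    rw [hlen (t i) (s (i+1)) (hts i hi).le] at h1
    exact h1
  -- assemble
  calc (∫ x in Ico 0 L, g x) = ∫ x in Ioc (s 0) (s N), g x := hIco
    _ ≤ ∫ x in Ioc (s 0) (s N), f x :=
        setIntegral_mono_on hgint hfint.integrableOn measurableSet_Ioc hpt
    _ = ∑ i ∈ Finset.range N, ∫ x in Ioc (s 0) (s N),
          ((A i).indicator (fun _ => (1:ℝ)) x + (B i).indicator (fun _ => (1:ℝ)) x) := by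
        rw [hf]
        exact integral_finset_sum _ (fun i _ => ((hAint i).add (hBint i)).integrableOn)
    _ ≤ ∑ i ∈ Finset.range N, (min z (t i - s i) + min z (s (i + 1) - t i)) := by
        apply Finset.sum_le_sum
        intro i hi
        rw [Finset.mem_range] at hi
        rw [integral_add (hAint i).integrableOn (hBint i).integrableOn]
        exact add_le_add (hAbd i hi) (hBbd i hi)
end

section
/- Let E ⊆ ℝ be L-periodic with E ∩ [0,L) a finite disjoint union of open intervals, and let P := per(E,[0,L)) denote the number of boundary points of E in [0,L). Then for every z ∈ ℝ, P·|z| − ∫_0^L |χ_E(x) − χ_E(x+z)| dx ≥ 0. -/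
open MeasureTheory Set


lemma perZ {L : ℝ} {E : Set ℝ} (hper : ∀ x : ℝ, x ∈ E ↔ x + L ∈ E) :
    ∀ (k : ℤ) (x : ℝ), x ∈ E ↔ x + k * L ∈ E := by
  have hper' : ∀ x : ℝ, x ∈ E ↔ x - L ∈ E := by
    intro x
    have := hper (x - L)
    rw [sub_add_cancel] at this
    exact this.symm
  intro k
  induction k using Int.induction_on with
  | zero => simp
  | succ n ih =>
      intro x
      have h1 := ih x
      have h2 := hper (x + (n : ℝ) * L)
      push_cast at h1 ⊢
      rw [show x + ((n:ℝ) + 1) * L = x + (n:ℝ) * L + L by ring]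
      exact h1.trans h2
  | pred n ih =>
      intro x
      have h1 := ih x
      have h2 := hper' (x + (-(n:ℝ)) * L)
      push_cast at h1 ⊢
      rw [show x + (-(n:ℝ) - 1) * L = x + (-(n:ℝ)) * L - L by ring]
      exact h1.trans h2

section main
variable {L : ℝ} {E : Set ℝ} {N : ℕ} {s t : ℕ → ℝ}

lemma pos_s (hL : 0 < L) (hs0 : 0 < s 0) (hst : ∀ i < N, s i < t i)
    (hts : ∀ i < N, t i < s (i + 1)) : ∀ i, i < N → 0 < s i := by
  intro i
  induction i with
  | zero => intro _; exact hs0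
  | succ n ih =>
      intro hn
      have hn' : n < N := Nat.lt_of_succ_lt hn
      have := ih hn'
      have := hst n hn'
      have := hts n hn'
      linarith

lemma t_mono (hst : ∀ i < N, s i < t i) (hts : ∀ i < N, t i < s (i + 1)) :
    ∀ k i, i + k ≤ N - 1 → t i ≤ t (i + k) := by
  intro k
  induction k with
  | zero => intro i _; simp
  | succ n ih =>
      intro i hi
      have h1 : i + n ≤ N - 1 := by omega
      have h2 : i + n + 1 < N := by omega
      have h3 : i + n < N := by omega
      have := ih i h1
      have := hts (i + n) h3
      have := hst (i + n + 1) h2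
      have : t (i + n) ≤ t (i + (n+1)) := by
        rw [show i + (n+1) = i + n + 1 by ring]
        linarith
      linarith

lemma t_lt_L (hN : 1 ≤ N) (hst : ∀ i < N, s i < t i) (hts : ∀ i < N, t i < s (i + 1))
    (htN : t (N - 1) < L) : ∀ i, i < N → t i < L := by
  intro i hi
  have := t_mono (N := N) hst hts (N - 1 - i) i (by omega)
  rw [show i + (N - 1 - i) = N - 1 by omega] at this
  linarith

lemma E_eq (hL : 0 < L) (hper : ∀ x : ℝ, x ∈ E ↔ x + L ∈ E)
    (hE : E ∩ Ico 0 L = ⋃ i ∈ Finset.range N, Ioo (s i) (t i)) :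
    E = ⋃ (k : ℤ), ⋃ i ∈ Finset.range N, Ioo (s i + k * L) (t i + k * L) := by
  ext x
  constructor
  · intro hx
    set k : ℤ := ⌊x / L⌋ with hk
    have h0 : 0 ≤ x - k * L := Int.sub_floor_div_mul_nonneg x hL
    have h1 : x - k * L < L := Int.sub_floor_div_mul_lt x hL
    have hxE : x - k * L ∈ E := by
      have := (perZ hper (-k) x).mp hx
      push_cast at this
      rwa [show x + -(k:ℝ) * L = x - k * L by ring] at this
    have : x - k * L ∈ E ∩ Ico 0 L := ⟨hxE, h0, h1⟩
    rw [hE] at this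
    simp only [mem_iUnion, mem_Ioo, Finset.mem_range] at this
    obtain ⟨i, hi, hlo, hhi⟩ := this
    simp only [mem_iUnion, mem_Ioo, Finset.mem_range]
    exact ⟨k, i, hi, by linarith, by linarith⟩
  · intro hx
    simp only [mem_iUnion, mem_Ioo, Finset.mem_range] at hx
    obtain ⟨k, i, hi, hlo, hhi⟩ := hx
    have hxE : x - k * L ∈ E := by
      have : x - k * L ∈ E ∩ Ico 0 L := by
        rw [hE]
        simp only [mem_iUnion, mem_Ioo, Finset.mem_range]
        exact ⟨i, hi, by linarith, by linarith⟩
      exact this.1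
    have := (perZ hper k (x - k * L)).mp hxE
    rwa [show x - (k:ℝ) * L + k * L = x by ring] at this

lemma cross_t (hL : 0 < L) (hper : ∀ x : ℝ, x ∈ E ↔ x + L ∈ E)
    (hE : E ∩ Ico 0 L = ⋃ i ∈ Finset.range N, Ioo (s i) (t i))
    {a c : ℝ} (hac : a ≤ c) (ha : a ∈ E) (hc : c ∉ E) :
    ∃ i, i < N ∧ ∃ k : ℤ, a ≤ t i + k * L ∧ t i + k * L ≤ c := by
  rw [E_eq hL hper hE] at ha hc
  simp only [mem_iUnion, mem_Ioo, Finset.mem_range] at ha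
  obtain ⟨k, i, hi, hlo, hhi⟩ := ha
  by_cases h : t i + k * L ≤ c
  · exact ⟨i, hi, k, le_of_lt hhi, h⟩
  · exfalso
    push_neg at h
    exact hc (by
      simp only [mem_iUnion, mem_Ioo, Finset.mem_range]
      exact ⟨k, i, hi, by linarith, h⟩)

lemma cross_s (hL : 0 < L) (hper : ∀ x : ℝ, x ∈ E ↔ x + L ∈ E)
    (hE : E ∩ Ico 0 L = ⋃ i ∈ Finset.range N, Ioo (s i) (t i))
    {a c : ℝ} (hac : a ≤ c) (ha : a ∉ E) (hc : c ∈ E) :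
    ∃ i, i < N ∧ ∃ k : ℤ, a ≤ s i + k * L ∧ s i + k * L ≤ c := by
  rw [E_eq hL hper hE] at ha hc
  simp only [mem_iUnion, mem_Ioo, Finset.mem_range] at hc
  obtain ⟨k, i, hi, hlo, hhi⟩ := hc
  by_cases h : a ≤ s i + k * L
  · exact ⟨i, hi, k, h, le_of_lt hlo⟩
  · exfalso
    push_neg at h
    exact ha (by
      simp only [mem_iUnion, mem_Ioo, Finset.mem_range]
      exact ⟨k, i, hi, h, by linarith⟩)

end main

lemma k_cases {L b x z : ℝ} {k : ℤ} (hL : 0 < L) (hb0 : 0 < b) (hbL : b < L)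
    (hx0 : 0 ≤ x) (hzL : z ≤ L) (h1 : x ≤ b + k * L) (h2 : b + k * L ≤ x + z)
    (hxL : x < L) : k = 0 ∨ k = 1 := by
  have hk1 : (-1 : ℝ) < (k : ℝ) := by nlinarith
  have hk2 : (k : ℝ) < 2 := by nlinarith
  have h1' : (-1 : ℤ) < k := by exact_mod_cast hk1
  have h2' : k < 2 := by exact_mod_cast hk2
  omega

section main2
variable {L : ℝ} {E : Set ℝ} {N : ℕ} {s t : ℕ → ℝ}

lemma pointwise_bound (hL : 0 < L) (hN : 1 ≤ N) (hper : ∀ x : ℝ, x ∈ E ↔ x + L ∈ E)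
    (hs0 : 0 < s 0) (hst : ∀ i < N, s i < t i) (hts : ∀ i < N, t i < s (i + 1))
    (htN : t (N - 1) < L)
    (hE : E ∩ Ico 0 L = ⋃ i ∈ Finset.range N, Ioo (s i) (t i))
    {z : ℝ} (hz : 0 ≤ z) (hzL : z ≤ L) {x : ℝ} (hx : x ∈ Ico 0 L) :
    |E.indicator (fun _ => (1 : ℝ)) x - E.indicator (fun _ => (1 : ℝ)) (x + z)| ≤
      ∑ i ∈ Finset.range N,
        ((Icc (s i - z) (s i)).indicator (fun _ => (1 : ℝ)) x
          + (Icc (s i + L - z) (s i + L)).indicator (fun _ => (1 : ℝ)) x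
          + (Icc (t i - z) (t i)).indicator (fun _ => (1 : ℝ)) x
          + (Icc (t i + L - z) (t i + L)).indicator (fun _ => (1 : ℝ)) x) := by
  obtain ⟨hx0, hxL⟩ := hx
  have hind : ∀ y : ℝ, (0 : ℝ) ≤ (Icc y (y + 1)).indicator (fun _ => (1:ℝ)) x := by
    intro y; exact Set.indicator_nonneg (fun _ _ => zero_le_one) x
  have hnn : ∀ (a b : ℝ), (0 : ℝ) ≤ (Icc a b).indicator (fun _ => (1:ℝ)) x :=
    fun a b => Set.indicator_nonneg (fun _ _ => zero_le_one) x
  have hterm_nn : ∀ i ∈ Finset.range N, (0:ℝ) ≤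
      (Icc (s i - z) (s i)).indicator (fun _ => (1 : ℝ)) x
        + (Icc (s i + L - z) (s i + L)).indicator (fun _ => (1 : ℝ)) x
        + (Icc (t i - z) (t i)).indicator (fun _ => (1 : ℝ)) x
        + (Icc (t i + L - z) (t i + L)).indicator (fun _ => (1 : ℝ)) x := by
    intro i _
    have := hnn (s i - z) (s i); have := hnn (s i + L - z) (s i + L)
    have := hnn (t i - z) (t i); have := hnn (t i + L - z) (t i + L)
    linarith
  by_cases hEq : (x ∈ E ↔ x + z ∈ E)
  · have : E.indicator (fun _ => (1 : ℝ)) x = E.indicator (fun _ => (1 : ℝ)) (x + z) := by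
      by_cases hx' : x ∈ E
      · rw [Set.indicator_of_mem hx', Set.indicator_of_mem (hEq.mp hx')]
      · rw [Set.indicator_of_notMem hx', Set.indicator_of_notMem (fun h => hx' (hEq.mpr h))]
    rw [this, sub_self, abs_zero]
    exact Finset.sum_nonneg hterm_nn
  · -- boundary crossing
    have habs : |E.indicator (fun _ => (1 : ℝ)) x - E.indicator (fun _ => (1 : ℝ)) (x + z)| ≤ 1 := by
      by_cases h1 : x ∈ E <;> by_cases h2 : x + z ∈ E <;>
        simp [Set.indicator_of_mem, Set.indicator_of_notMem, h1, h2]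
    have hxz : x ≤ x + z := by linarith
    -- find a boundary point and the relevant i and interval
    have hkey : ∃ i, i < N ∧
        ((Icc (s i - z) (s i)).indicator (fun _ => (1 : ℝ)) x = 1 ∨
         (Icc (s i + L - z) (s i + L)).indicator (fun _ => (1 : ℝ)) x = 1 ∨
         (Icc (t i - z) (t i)).indicator (fun _ => (1 : ℝ)) x = 1 ∨
         (Icc (t i + L - z) (t i + L)).indicator (fun _ => (1 : ℝ)) x = 1) := by
      by_cases h1 : x ∈ E
      · have h2 : x + z ∉ E := fun h => hEq ⟨fun _ => h, fun _ => h1⟩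
        obtain ⟨i, hi, k, hk1, hk2⟩ := cross_t hL hper hE hxz h1 h2
        have hb0 : 0 < t i := lt_trans (pos_s hL hs0 hst hts i hi) (hst i hi)
        have hbL : t i < L := t_lt_L hN hst hts htN i hi
        rcases k_cases hL hb0 hbL hx0 hzL hk1 hk2 hxL with rfl | rfl
        · refine ⟨i, hi, Or.inr (Or.inr (Or.inl ?_))⟩
          rw [Set.indicator_of_mem]
          constructor <;> push_cast at hk1 hk2 <;> linarith
        · refine ⟨i, hi, Or.inr (Or.inr (Or.inr ?_))⟩
          rw [Set.indicator_of_mem]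
          constructor <;> push_cast at hk1 hk2 <;> linarith
      · have h2 : x + z ∈ E := by
          by_contra h2
          exact hEq ⟨fun h => absurd h h1, fun h => absurd h h2⟩
        obtain ⟨i, hi, k, hk1, hk2⟩ := cross_s hL hper hE hxz h1 h2
        have hb0 : 0 < s i := pos_s hL hs0 hst hts i hi
        have hbL : s i < L := lt_trans (hst i hi) (t_lt_L hN hst hts htN i hi)
        rcases k_cases hL hb0 hbL hx0 hzL hk1 hk2 hxL with rfl | rfl
        · refine ⟨i, hi, Or.inl ?_⟩
          rw [Set.indicator_of_mem]
          constructor <;> push_cast at hk1 hk2 <;> linarith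
        · refine ⟨i, hi, Or.inr (Or.inl ?_)⟩
          rw [Set.indicator_of_mem]
          constructor <;> push_cast at hk1 hk2 <;> linarith
    obtain ⟨i, hi, hone⟩ := hkey
    have hterm : (1:ℝ) ≤
        (Icc (s i - z) (s i)).indicator (fun _ => (1 : ℝ)) x
          + (Icc (s i + L - z) (s i + L)).indicator (fun _ => (1 : ℝ)) x
          + (Icc (t i - z) (t i)).indicator (fun _ => (1 : ℝ)) x
          + (Icc (t i + L - z) (t i + L)).indicator (fun _ => (1 : ℝ)) x := by
      have a1 := hnn (s i - z) (s i); have a2 := hnn (s i + L - z) (s i + L)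
      have a3 := hnn (t i - z) (t i); have a4 := hnn (t i + L - z) (t i + L)
      rcases hone with h | h | h | h <;> rw [h] <;> linarith
    calc |E.indicator (fun _ => (1 : ℝ)) x - E.indicator (fun _ => (1 : ℝ)) (x + z)| ≤ 1 := habs
      _ ≤ _ := le_trans hterm (Finset.single_le_sum hterm_nn (Finset.mem_range.mpr hi))
end main2

lemma indicator_integral (a b : ℝ) :
    ∫ x in Ico (0:ℝ) L, (Icc a b).indicator (fun _ => (1 : ℝ)) x
      = (volume (Ico (0:ℝ) L ∩ Icc a b)).toReal := by
  rw [setIntegral_indicator measurableSet_Icc, setIntegral_const, smul_eq_mul, mul_one]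
  rfl

lemma indicator_intOn (a b : ℝ) :
    IntegrableOn ((Icc a b).indicator (fun _ => (1 : ℝ))) (Ico (0:ℝ) L) volume := by
  refine Integrable.integrableOn ?_
  rw [integrable_indicator_iff measurableSet_Icc]
  exact integrableOn_const measure_Icc_lt_top.ne

lemma pair_vol {L b z : ℝ} (hL : 0 < L) (hb0 : 0 < b) (hbL : b < L) (hz : 0 ≤ z) (hzL : z ≤ L) :
    (volume (Ico (0:ℝ) L ∩ Icc (b - z) b)).toReal
      + (volume (Ico (0:ℝ) L ∩ Icc (b + L - z) (b + L))).toReal ≤ z := by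
  have e1 : Ico (0:ℝ) L ∩ Icc (b - z) b = Icc (max (b - z) 0) b := by
    ext y
    simp only [mem_inter_iff, mem_Ico, mem_Icc, max_le_iff]
    constructor
    · rintro ⟨⟨h1, h2⟩, h3, h4⟩; exact ⟨⟨h3, h1⟩, h4⟩
    · rintro ⟨⟨h1, h2⟩, h3⟩; exact ⟨⟨h2, by linarith⟩, h1, h3⟩
  have e2 : Ico (0:ℝ) L ∩ Icc (b + L - z) (b + L) = Ico (b + L - z) L := by
    ext y
    simp only [mem_inter_iff, mem_Ico, mem_Icc]
    constructor
    · rintro ⟨⟨h1, h2⟩, h3, h4⟩; exact ⟨h3, h2⟩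
    · rintro ⟨h1, h2⟩; exact ⟨⟨by linarith, h2⟩, h1, by linarith⟩
  rw [e1, e2, Real.volume_Icc, Real.volume_Ico, ENNReal.toReal_ofReal', ENNReal.toReal_ofReal']
  rcases le_total z b with h | h
  · rw [max_eq_left (by linarith : (0:ℝ) ≤ b - z)]
    rw [max_eq_right (by linarith : L - (b + L - z) ≤ 0), max_eq_left (by linarith : (0:ℝ) ≤ b - (b-z))]
    linarith
  · rw [max_eq_right (by linarith : b - z ≤ 0)]
    rw [max_eq_left (by linarith : (0:ℝ) ≤ L - (b + L - z)), max_eq_left (by linarith : (0:ℝ) ≤ b - 0)]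
    linarith

section main3
variable {L : ℝ} {E : Set ℝ} {N : ℕ} {s t : ℕ → ℝ}

lemma key (hL : 0 < L) (hN : 1 ≤ N) (hper : ∀ x : ℝ, x ∈ E ↔ x + L ∈ E)
    (hs0 : 0 < s 0) (hst : ∀ i < N, s i < t i) (hts : ∀ i < N, t i < s (i + 1))
    (htN : t (N - 1) < L)
    (hE : E ∩ Ico 0 L = ⋃ i ∈ Finset.range N, Ioo (s i) (t i))
    {z : ℝ} (hz : 0 ≤ z) (hzL : z ≤ L) :
    ∫ x in Ico (0:ℝ) L, |E.indicator (fun _ => (1:ℝ)) x - E.indicator (fun _ => (1:ℝ)) (x + z)|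
      ≤ 2 * N * z := by
  classical
  have hEm : MeasurableSet E := by
    rw [E_eq hL hper hE]
    exact MeasurableSet.iUnion fun k => MeasurableSet.iUnion fun i =>
      MeasurableSet.iUnion fun _ => measurableSet_Ioo
  have m1 : Measurable (E.indicator (fun _ => (1:ℝ))) := measurable_const.indicator hEm
  have mg : Measurable (fun x => |E.indicator (fun _ => (1:ℝ)) x
      - E.indicator (fun _ => (1:ℝ)) (x + z)|) :=
    (m1.sub (m1.comp (measurable_add_const z))).abs
  have habs1 : ∀ u v : ℝ, |E.indicator (fun _ => (1:ℝ)) u - E.indicator (fun _ => (1:ℝ)) v| ≤ 1 := by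
    intro u v
    by_cases h1 : u ∈ E <;> by_cases h2 : v ∈ E <;>
      simp [Set.indicator_of_mem, Set.indicator_of_notMem, h1, h2]
  have hgInt : IntegrableOn (fun x => |E.indicator (fun _ => (1:ℝ)) x
      - E.indicator (fun _ => (1:ℝ)) (x + z)|) (Ico (0:ℝ) L) volume := by
    refine Measure.integrableOn_of_bounded (M := 1) measure_Ico_lt_top.ne
      mg.aestronglyMeasurable ?_
    filter_upwards with x
    rw [Real.norm_eq_abs, abs_abs]
    exact habs1 _ _
  have hFInt : IntegrableOn (fun x => ∑ i ∈ Finset.range N,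
        ((Icc (s i - z) (s i)).indicator (fun _ => (1 : ℝ)) x
          + (Icc (s i + L - z) (s i + L)).indicator (fun _ => (1 : ℝ)) x
          + (Icc (t i - z) (t i)).indicator (fun _ => (1 : ℝ)) x
          + (Icc (t i + L - z) (t i + L)).indicator (fun _ => (1 : ℝ)) x)) (Ico (0:ℝ) L) volume :=
    integrable_finset_sum _ fun i _ =>
      (((indicator_intOn _ _).add (indicator_intOn _ _)).add (indicator_intOn _ _)).add
        (indicator_intOn _ _)
  have step1 := setIntegral_mono_on hgInt hFInt measurableSet_Ico
    (fun x hx => pointwise_bound hL hN hper hs0 hst hts htN hE hz hzL hx)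
  have step2 : (∫ x in Ico (0:ℝ) L, ∑ i ∈ Finset.range N,
        ((Icc (s i - z) (s i)).indicator (fun _ => (1 : ℝ)) x
          + (Icc (s i + L - z) (s i + L)).indicator (fun _ => (1 : ℝ)) x
          + (Icc (t i - z) (t i)).indicator (fun _ => (1 : ℝ)) x
          + (Icc (t i + L - z) (t i + L)).indicator (fun _ => (1 : ℝ)) x))
      = ∑ i ∈ Finset.range N,
        ((volume (Ico (0:ℝ) L ∩ Icc (s i - z) (s i))).toReal
          + (volume (Ico (0:ℝ) L ∩ Icc (s i + L - z) (s i + L))).toReal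
          + (volume (Ico (0:ℝ) L ∩ Icc (t i - z) (t i))).toReal
          + (volume (Ico (0:ℝ) L ∩ Icc (t i + L - z) (t i + L))).toReal) := by
    have h1 : ∀ (a b : ℝ), IntegrableOn (fun x => (Icc a b).indicator (fun _ => (1:ℝ)) x)
        (Ico (0:ℝ) L) volume := fun a b => indicator_intOn a b
    have h2 : ∀ i : ℕ, IntegrableOn (fun x =>
        (Icc (s i - z) (s i)).indicator (fun _ => (1 : ℝ)) x
          + (Icc (s i + L - z) (s i + L)).indicator (fun _ => (1 : ℝ)) x)
        (Ico (0:ℝ) L) volume := fun i => (h1 _ _).add (h1 _ _)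
    have h3 : ∀ i : ℕ, IntegrableOn (fun x =>
        (Icc (s i - z) (s i)).indicator (fun _ => (1 : ℝ)) x
          + (Icc (s i + L - z) (s i + L)).indicator (fun _ => (1 : ℝ)) x
          + (Icc (t i - z) (t i)).indicator (fun _ => (1 : ℝ)) x)
        (Ico (0:ℝ) L) volume := fun i => (h2 i).add (h1 _ _)
    have h4 : ∀ i ∈ Finset.range N, IntegrableOn (fun x =>
        (Icc (s i - z) (s i)).indicator (fun _ => (1 : ℝ)) x
          + (Icc (s i + L - z) (s i + L)).indicator (fun _ => (1 : ℝ)) x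
          + (Icc (t i - z) (t i)).indicator (fun _ => (1 : ℝ)) x
          + (Icc (t i + L - z) (t i + L)).indicator (fun _ => (1 : ℝ)) x)
        (Ico (0:ℝ) L) volume := fun i _ => (h3 i).add (h1 _ _)
    rw [integral_finset_sum _ h4]
    refine Finset.sum_congr rfl fun i _ => ?_
    rw [integral_add (h3 i) (h1 _ _), integral_add (h2 i) (h1 _ _),
      integral_add (h1 _ _) (h1 _ _),
      indicator_integral, indicator_integral, indicator_integral, indicator_integral]
  have step3 : (∑ i ∈ Finset.range N,
        ((volume (Ico (0:ℝ) L ∩ Icc (s i - z) (s i))).toReal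
          + (volume (Ico (0:ℝ) L ∩ Icc (s i + L - z) (s i + L))).toReal
          + (volume (Ico (0:ℝ) L ∩ Icc (t i - z) (t i))).toReal
          + (volume (Ico (0:ℝ) L ∩ Icc (t i + L - z) (t i + L))).toReal))
      ≤ ∑ _i ∈ Finset.range N, (z + z) := by
    refine Finset.sum_le_sum fun i hi => ?_
    have hi' := Finset.mem_range.mp hi
    have hsi0 : 0 < s i := pos_s hL hs0 hst hts i hi'
    have hti0 : 0 < t i := lt_trans hsi0 (hst i hi')
    have htiL : t i < L := t_lt_L hN hst hts htN i hi'
    have hsiL : s i < L := lt_trans (hst i hi') htiL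
    have p1 := pair_vol hL hsi0 hsiL hz hzL
    have p2 := pair_vol hL hti0 htiL hz hzL
    linarith
  calc ∫ x in Ico (0:ℝ) L,
        |E.indicator (fun _ => (1:ℝ)) x - E.indicator (fun _ => (1:ℝ)) (x + z)|
      ≤ _ := step1
    _ = _ := step2
    _ ≤ ∑ _i ∈ Finset.range N, (z + z) := step3
    _ = 2 * N * z := by rw [Finset.sum_const, Finset.card_range, nsmul_eq_mul]; ring

end main3

section main4
variable {L : ℝ} {E : Set ℝ} {N : ℕ} {s t : ℕ → ℝ}

lemma key2 (hL : 0 < L) (hN : 1 ≤ N) (hper : ∀ x : ℝ, x ∈ E ↔ x + L ∈ E)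
    (hs0 : 0 < s 0) (hst : ∀ i < N, s i < t i) (hts : ∀ i < N, t i < s (i + 1))
    (htN : t (N - 1) < L)
    (hE : E ∩ Ico 0 L = ⋃ i ∈ Finset.range N, Ioo (s i) (t i))
    {z : ℝ} (hz : 0 ≤ z) :
    ∫ x in Ico (0:ℝ) L, |E.indicator (fun _ => (1:ℝ)) x - E.indicator (fun _ => (1:ℝ)) (x + z)|
      ≤ 2 * N * z := by
  rcases le_total z L with hzL | hzL
  · exact key hL hN hper hs0 hst hts htN hE hz hzL
  · have habs1 : ∀ u v : ℝ,
        |E.indicator (fun _ => (1:ℝ)) u - E.indicator (fun _ => (1:ℝ)) v| ≤ 1 := by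
      intro u v
      by_cases h1 : u ∈ E <;> by_cases h2 : v ∈ E <;>
        simp [Set.indicator_of_mem, Set.indicator_of_notMem, h1, h2]
    have hb : ‖∫ x in Ico (0:ℝ) L,
        |E.indicator (fun _ => (1:ℝ)) x - E.indicator (fun _ => (1:ℝ)) (x + z)|‖
        ≤ 1 * (volume (Ico (0:ℝ) L)).toReal :=
      norm_setIntegral_le_of_norm_le_const measure_Ico_lt_top
        (fun x _ => by rw [Real.norm_eq_abs, abs_abs]; exact habs1 _ _)
    rw [Real.volume_Ico, sub_zero, ENNReal.toReal_ofReal hL.le, one_mul, Real.norm_eq_abs] at hb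
    have hN' : (1 : ℝ) ≤ N := by exact_mod_cast hN
    calc ∫ x in Ico (0:ℝ) L,
          |E.indicator (fun _ => (1:ℝ)) x - E.indicator (fun _ => (1:ℝ)) (x + z)|
        ≤ |(∫ x in Ico (0:ℝ) L,
          |E.indicator (fun _ => (1:ℝ)) x - E.indicator (fun _ => (1:ℝ)) (x + z)|)| := le_abs_self _
      _ ≤ L := hb
      _ ≤ 2 * N * z := by nlinarith

lemma key3 (hL : 0 < L) (hN : 1 ≤ N) (hper : ∀ x : ℝ, x ∈ E ↔ x + L ∈ E)
    (hs0 : 0 < s 0) (hst : ∀ i < N, s i < t i) (hts : ∀ i < N, t i < s (i + 1))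
    (htN : t (N - 1) < L)
    (hE : E ∩ Ico 0 L = ⋃ i ∈ Finset.range N, Ioo (s i) (t i))
    (z : ℝ) :
    ∫ x in Ico (0:ℝ) L, |E.indicator (fun _ => (1:ℝ)) x - E.indicator (fun _ => (1:ℝ)) (x + z)|
      ≤ 2 * N * |z| := by
  rcases le_total 0 z with hz | hz
  · rw [abs_of_nonneg hz]
    exact key2 hL hN hper hs0 hst hts htN hE hz
  · rw [abs_of_nonpos hz]
    set g : ℝ → ℝ := fun x =>
      |E.indicator (fun _ => (1:ℝ)) x - E.indicator (fun _ => (1:ℝ)) (x + z)| with hg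
    have hindper : ∀ x : ℝ, E.indicator (fun _ => (1:ℝ)) (x + L)
        = E.indicator (fun _ => (1:ℝ)) x := by
      intro x
      by_cases h : x ∈ E
      · rw [Set.indicator_of_mem ((hper x).mp h), Set.indicator_of_mem h]
      · rw [Set.indicator_of_notMem (fun hh => h ((hper x).mpr hh)),
          Set.indicator_of_notMem h]
    have hper_g : Function.Periodic g L := by
      intro x
      simp only [hg]
      rw [hindper x, show x + L + z = (x + z) + L by ring, hindper (x + z)]
    have I1 : ∫ x in Ico (0:ℝ) L, g x = ∫ x in (0:ℝ)..L, g x := by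
      rw [intervalIntegral.integral_of_le hL.le, restrict_Ico_eq_restrict_Ioc]
    have I3 : ∫ x in (0:ℝ)..L, g x = ∫ x in (-z)..(-z + L), g x := by
      have := hper_g.intervalIntegral_add_eq 0 (-z)
      simpa using this
    have I4 : ∫ x in (-z)..(-z + L), g x = ∫ x in (0:ℝ)..L, g (x + -z) := by
      rw [intervalIntegral.integral_comp_add_right g (-z)]
      congr 1 <;> ring
    have I5 : (fun x => g (x + -z)) = fun x =>
        |E.indicator (fun _ => (1:ℝ)) x - E.indicator (fun _ => (1:ℝ)) (x + -z)| := by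
      funext x
      simp only [hg]
      rw [show x + -z + z = x by ring, abs_sub_comm]
    have I6 : ∫ x in (0:ℝ)..L, g (x + -z)
        = ∫ x in Ico (0:ℝ) L,
            |E.indicator (fun _ => (1:ℝ)) x - E.indicator (fun _ => (1:ℝ)) (x + -z)| := by
      rw [I5, intervalIntegral.integral_of_le hL.le, restrict_Ico_eq_restrict_Ioc]
    calc ∫ x in Ico (0:ℝ) L, g x = _ := I1
      _ = _ := I3
      _ = _ := I4
      _ = _ := I6
      _ ≤ 2 * N * (-z) := key2 hL hN hper hs0 hst hts htN hE (by linarith)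

end main4

theorem stmt_13 (L : ℝ) (hL : 0 < L) (E : Set ℝ) (N : ℕ) (hN : 1 ≤ N)
    (s t : ℕ → ℝ)
    (hper : ∀ x : ℝ, x ∈ E ↔ x + L ∈ E)
    (hs0 : 0 < s 0)
    (hst : ∀ i < N, s i < t i)
    (hts : ∀ i < N, t i < s (i + 1))
    (hsN : s N = s 0 + L)
    (htN : t (N - 1) < L)
    (hE : E ∩ Ico 0 L = ⋃ i ∈ Finset.range N, Ioo (s i) (t i))
    (z : ℝ) :
    0 ≤ (2 * N : ℝ) * |z| -
      ∫ x in Ico 0 L, |E.indicator (fun _ => (1 : ℝ)) x - E.indicator (fun _ => (1 : ℝ)) (x + z)| := by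
  rw [sub_nonneg]
  exact key3 hL hN hper hs0 hst hts htN hE z
end

section
/- Let q > 2, and let h > 0, g > 0, τ ≥ 0 with β := q − 2. Then ∫_h^∞ (z − h)/(z^q + τ^{q/β}) dz ≥ c · min(h^{−β}, τ^{−1}) for some constant c > 0 depending only on q (with the convention that min(h^{−β}, τ^{−1}) = h^{−β} when τ = 0). -/
open MeasureTheory

theorem stmt_14 (q : ℝ) (hq : 2 < q) :
    ∃ c : ℝ, 0 < c ∧ ∀ h τ : ℝ, 0 < h → 0 ≤ τ →
      let β : ℝ := q - 2
      let M : ℝ := if τ = 0 then h ^ (-β) else min (h ^ (-β)) τ⁻¹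
      c * M ≤ ∫ z in Set.Ioi h, (z - h) / (z ^ q + τ ^ (q / β)) := by
  have h3q : (0:ℝ) < 3 ^ q + 1 := by positivity
  refine ⟨(3 ^ q + 1)⁻¹, by positivity, ?_⟩
  intro h τ hh hτ
  dsimp only
  have hβ : (0:ℝ) < q - 2 := by linarith
  set a : ℝ := max h (τ ^ (1 / (q - 2))) with ha_def
  have hha : h ≤ a := le_max_left _ _
  have ha : 0 < a := lt_of_lt_of_le hh hha
  set f : ℝ → ℝ := fun z => (z - h) / (z ^ q + τ ^ (q / (q - 2))) with hf_def
  have hτq : 0 ≤ τ ^ (q / (q - 2)) := Real.rpow_nonneg hτ _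
  -- the denominator bound on z ∈ Ioc (2a) (3a)
  have hτa : τ ^ (q / (q - 2)) ≤ a ^ q := by
    have h1 : τ ^ (1 / (q - 2)) ≤ a := le_max_right _ _
    have h2 : τ ^ (q / (q - 2)) = (τ ^ (1 / (q - 2))) ^ q := by
      rw [← Real.rpow_mul hτ]
      ring_nf
    rw [h2]
    exact Real.rpow_le_rpow (Real.rpow_nonneg hτ _) h1 (by linarith)
  -- measurability
  have hmeas : Measurable f := by
    unfold f
    fun_prop
  -- nonnegativity on Ioi h
  have hnonneg : ∀ z ∈ Set.Ioi h, 0 ≤ f z := by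
    intro z hz
    have hz' : h < z := hz
    have hz0 : 0 < z := lt_trans hh hz'
    apply div_nonneg (by linarith)
    positivity
  -- integrability on Ioi h
  have hint : IntegrableOn f (Set.Ioi h) := by
    have hg : IntegrableOn (fun z : ℝ => z ^ (1 - q)) (Set.Ioi h) :=
      integrableOn_Ioi_rpow_of_lt (by linarith) hh
    apply Integrable.mono' hg (hmeas.aestronglyMeasurable)
    filter_upwards [ae_restrict_mem measurableSet_Ioi] with z hz
    have hz' : h < z := hz
    have hz0 : 0 < z := lt_trans hh hz'
    rw [Real.norm_eq_abs, abs_of_nonneg (hnonneg z hz)]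
    have hden : z ^ q ≤ z ^ q + τ ^ (q / (q - 2)) := by linarith
    have hzq : (0:ℝ) < z ^ q := Real.rpow_pos_of_pos hz0 q
    calc f z ≤ z / z ^ q := by
          apply div_le_div₀ (le_of_lt hz0) (by linarith) hzq hden
      _ = z ^ (1 - q) := by
          rw [Real.rpow_sub hz0, Real.rpow_one]
  -- pointwise bound on Ioc (2a) (3a)
  have hbound : ∀ z ∈ Set.Ioc (2 * a) (3 * a),
      a / ((3 ^ q + 1) * a ^ q) ≤ f z := by
    intro z hz
    obtain ⟨hz1, hz2⟩ := hz
    have hz0 : 0 < z := by nlinarith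
    have hzh : a ≤ z - h := by nlinarith
    have hzq : z ^ q ≤ 3 ^ q * a ^ q := by
      rw [← Real.mul_rpow (by norm_num) (le_of_lt ha)]
      exact Real.rpow_le_rpow (le_of_lt hz0) hz2 (by linarith)
    have hden : z ^ q + τ ^ (q / (q - 2)) ≤ (3 ^ q + 1) * a ^ q := by
      nlinarith
    have hdpos : 0 < z ^ q + τ ^ (q / (q - 2)) := by
      have := Real.rpow_pos_of_pos hz0 q; linarith
    exact div_le_div₀ (by linarith) hzh hdpos hden
  -- compare the integrals
  have hsub : Set.Ioc (2 * a) (3 * a) ⊆ Set.Ioi h := by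
    intro z hz
    have := hz.1
    simp only [Set.mem_Ioi]
    nlinarith
  have step1 : ∫ z in Set.Ioc (2 * a) (3 * a), f z ≤ ∫ z in Set.Ioi h, f z := by
    apply setIntegral_mono_set hint
    · filter_upwards [ae_restrict_mem measurableSet_Ioi] with z hz using hnonneg z hz
    · exact Filter.Eventually.of_forall hsub
  have step2 : a / ((3 ^ q + 1) * a ^ q) * a ≤ ∫ z in Set.Ioc (2 * a) (3 * a), f z := by
    have hvol : (volume (Set.Ioc (2 * a) (3 * a))).toReal = a := by
      rw [Real.volume_Ioc, ENNReal.toReal_ofReal (by linarith)]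
      ring
    have := setIntegral_ge_of_const_le measurableSet_Ioc
      (by rw [Real.volume_Ioc]; exact ENNReal.ofReal_ne_top) hbound
      (hint.mono_set hsub)
    rw [measureReal_def, hvol, smul_eq_mul] at this
    linarith
  -- identify the constant
  have hM : (if τ = 0 then h ^ (-(q - 2)) else min (h ^ (-(q - 2))) τ⁻¹) = a ^ (-(q - 2)) := by
    by_cases hτ0 : τ = 0
    · simp only [hτ0, if_true]
      have : (0:ℝ) ^ (1 / (q - 2)) = 0 := Real.zero_rpow (by positivity)
      rw [ha_def, hτ0, this, max_eq_left (le_of_lt hh)]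
    · simp only [hτ0, if_false]
      have hτpos : 0 < τ := lt_of_le_of_ne hτ (Ne.symm hτ0)
      have hτr : (τ ^ (1 / (q - 2))) ^ (-(q - 2)) = τ⁻¹ := by
        rw [← Real.rpow_mul (le_of_lt hτpos), ← Real.rpow_neg_one τ]
        congr 1
        field_simp
      rcases le_total h (τ ^ (1 / (q - 2))) with hc | hc
      · rw [ha_def, max_eq_right hc, hτr]
        have : (τ ^ (1 / (q - 2))) ^ (-(q - 2)) ≤ h ^ (-(q - 2)) :=
          Real.rpow_le_rpow_of_nonpos hh hc (by linarith)
        rw [hτr] at this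
        exact min_eq_right this
      · rw [ha_def, max_eq_left hc]
        have : h ^ (-(q - 2)) ≤ (τ ^ (1 / (q - 2))) ^ (-(q - 2)) := by
          have hτp : 0 < τ ^ (1 / (q - 2)) := Real.rpow_pos_of_pos hτpos _
          exact Real.rpow_le_rpow_of_nonpos hτp hc (by linarith)
        rw [hτr] at this
        exact min_eq_left this
  rw [hM]
  have hkey : (3 ^ q + 1)⁻¹ * a ^ (-(q - 2)) = a / ((3 ^ q + 1) * a ^ q) * a := by
    have h1 : a ^ (-(q - 2)) = a * a / a ^ q := by
      rw [show -(q - 2) = 2 - q by ring, Real.rpow_sub ha]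
      rw [show (2:ℝ) = ((2:ℕ):ℝ) by norm_num, Real.rpow_natCast]
      ring
    rw [h1]
    have haq : (0:ℝ) < a ^ q := Real.rpow_pos_of_pos ha q
    field_simp
  rw [hkey]
  exact le_trans step2 step1
end

section
/- Define for h > 0 the periodic stripe set E_h := ⋃_{k∈ℤ} [2kh, (2k+1)h] ⊆ ℝ. For q > 3, ∫_0^∞ z^{−q} ( z − ∫_0^h χ_{E_h^c}(x+z) dx ) dz = (2(1 − 2^{−(q−3)}) / ((q−2)(q−1))) · (∑_{k≥1} k^{−(q−2)}) · h^{−(q−2)}. -/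
open MeasureTheory Set

namespace Stmt15

/-- the stripe set -/
def Es (h : ℝ) : Set ℝ := ⋃ k : ℤ, Icc (2 * k * h) ((2 * k + 1) * h)

lemma measurable_Es (h : ℝ) : MeasurableSet (Es h) :=
  MeasurableSet.iUnion (fun _ => measurableSet_Icc)

lemma mem_Es_iff {h y : ℝ} : y ∈ Es h ↔ ∃ k : ℤ, 2 * k * h ≤ y ∧ y ≤ (2 * k + 1) * h := by
  simp [Es, mem_iUnion, mem_Icc]

/-- translation identity for the inner integral -/
lemma inner_eq (h z : ℝ) :
    (∫ x in Ioc (0:ℝ) h, (Es h)ᶜ.indicator (fun _ => (1:ℝ)) (x + z)) =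
      (volume ((Es h)ᶜ ∩ Ioc z (z + h))).toReal := by
  have hS : MeasurableSet (Es h)ᶜ := (measurable_Es h).compl
  set S := (Es h)ᶜ with hSdef
  have h1 : (∫ x in Ioc (0:ℝ) h, S.indicator (fun _ => (1:ℝ)) (x + z)) =
      ∫ x, (Ioc (0:ℝ) h).indicator (fun x => S.indicator (fun _ => (1:ℝ)) (x + z)) x := by
    rw [integral_indicator measurableSet_Ioc]
  have h2 : (Ioc (0:ℝ) h).indicator (fun x => S.indicator (fun _ => (1:ℝ)) (x + z)) =
      fun x => ((Ioc z (z+h)).indicator (S.indicator (fun _ => (1:ℝ)))) (x + z) := by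
    funext x
    by_cases hx : x ∈ Ioc (0:ℝ) h
    · have hx' : x + z ∈ Ioc z (z + h) := by
        simp only [mem_Ioc] at hx ⊢; constructor <;> linarith [hx.1, hx.2]
      rw [indicator_of_mem hx, indicator_of_mem hx']
    · have hx' : x + z ∉ Ioc z (z + h) := by
        simp only [mem_Ioc] at hx ⊢; intro h1; by_contra h2; exact hx ⟨by linarith, by linarith⟩
      rw [indicator_of_notMem hx, indicator_of_notMem hx']
  rw [h1, h2, integral_add_right_eq_self
      (fun y => ((Ioc z (z+h)).indicator (S.indicator (fun _ => (1:ℝ)))) y) z,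
    integral_indicator measurableSet_Ioc, setIntegral_indicator hS, setIntegral_const]
  rw [inter_comm]
  simp
  rfl

lemma vol1 {h : ℝ} (hh : 0 < h) (m : ℕ) {z : ℝ} (h1 : 2 * m * h ≤ z) (h2 : z ≤ (2 * m + 1) * h) :
    volume ((Es h)ᶜ ∩ Ioc z (z + h)) = ENNReal.ofReal (z - 2 * m * h) := by
  apply le_antisymm
  · have hsub : (Es h)ᶜ ∩ Ioc z (z + h) ⊆ Icc ((2 * m + 1) * h) (z + h) := by
      rintro y ⟨hyc, hy1, hy2⟩
      refine ⟨?_, hy2⟩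
      by_contra hlt
      push_neg at hlt
      exact hyc (mem_Es_iff.mpr ⟨(m : ℤ), by push_cast; constructor <;> linarith⟩)
    calc volume ((Es h)ᶜ ∩ Ioc z (z + h)) ≤ volume (Icc ((2 * m + 1) * h) (z + h)) :=
          measure_mono hsub
      _ = ENNReal.ofReal (z - 2 * m * h) := by rw [Real.volume_Icc]; ring_nf
  · have hsub : Ioo ((2 * m + 1) * h) (z + h) ⊆ (Es h)ᶜ ∩ Ioc z (z + h) := by
      rintro y ⟨hy1, hy2⟩
      refine ⟨?_, ⟨by linarith, le_of_lt hy2⟩⟩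
      intro hy
      obtain ⟨k, hk1, hk2⟩ := mem_Es_iff.mp hy
      have hklt : (k : ℝ) < m + 1 := by nlinarith
      have hk' : k ≤ (m : ℤ) := by exact_mod_cast Int.lt_add_one_iff.mp (by exact_mod_cast hklt)
      have : (k : ℝ) ≤ m := by exact_mod_cast hk'
      nlinarith
    calc ENNReal.ofReal (z - 2 * m * h) = volume (Ioo ((2 * m + 1) * h) (z + h)) := by
          rw [Real.volume_Ioo]; ring_nf
      _ ≤ volume ((Es h)ᶜ ∩ Ioc z (z + h)) := measure_mono hsub

lemma vol2 {h : ℝ} (hh : 0 < h) (m : ℕ) {z : ℝ} (h1 : (2 * m + 1) * h ≤ z)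
    (h2 : z ≤ (2 * m + 2) * h) :
    volume ((Es h)ᶜ ∩ Ioc z (z + h)) = ENNReal.ofReal ((2 * m + 2) * h - z) := by
  apply le_antisymm
  · have hsub : (Es h)ᶜ ∩ Ioc z (z + h) ⊆ Icc z ((2 * m + 2) * h) := by
      rintro y ⟨hyc, hy1, hy2⟩
      refine ⟨le_of_lt hy1, ?_⟩
      by_contra hlt
      push_neg at hlt
      exact hyc (mem_Es_iff.mpr ⟨(m : ℤ) + 1, by push_cast; constructor <;> linarith⟩)
    calc volume ((Es h)ᶜ ∩ Ioc z (z + h)) ≤ volume (Icc z ((2 * m + 2) * h)) := measure_mono hsub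
      _ = ENNReal.ofReal ((2 * m + 2) * h - z) := by rw [Real.volume_Icc]
  · have hsub : Ioo z ((2 * m + 2) * h) ⊆ (Es h)ᶜ ∩ Ioc z (z + h) := by
      rintro y ⟨hy1, hy2⟩
      refine ⟨?_, ⟨hy1, by linarith⟩⟩
      intro hy
      obtain ⟨k, hk1, hk2⟩ := mem_Es_iff.mp hy
      have hklt : (k : ℝ) < m + 1 := by nlinarith
      have hk' : k ≤ (m : ℤ) := by exact_mod_cast Int.lt_add_one_iff.mp (by exact_mod_cast hklt)
      have : (k : ℝ) ≤ m := by exact_mod_cast hk'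
      nlinarith
    calc ENNReal.ofReal ((2 * m + 2) * h - z) = volume (Ioo z ((2 * m + 2) * h)) := by
          rw [Real.volume_Ioo]
      _ ≤ volume ((Es h)ᶜ ∩ Ioc z (z + h)) := measure_mono hsub

/-- the full integrand -/
noncomputable def F (q h : ℝ) (z : ℝ) : ℝ :=
  z ^ (-q) * (z - ∫ x in Ioc (0:ℝ) h, (Es h)ᶜ.indicator (fun _ => (1:ℝ)) (x + z))

lemma F1 {q h : ℝ} (hh : 0 < h) (m : ℕ) {z : ℝ} (h1 : 2 * m * h ≤ z)
    (h2 : z ≤ (2 * m + 1) * h) : F q h z = z ^ (-q) * (2 * m * h) := by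
  have hz : (0:ℝ) ≤ z - 2 * m * h := by linarith
  rw [F, inner_eq, vol1 hh m h1 h2, ENNReal.toReal_ofReal hz]
  ring_nf

lemma F2 {q h : ℝ} (hh : 0 < h) (m : ℕ) {z : ℝ} (h1 : (2 * m + 1) * h ≤ z)
    (h2 : z ≤ (2 * m + 2) * h) : F q h z = z ^ (-q) * (2 * z - (2 * m + 2) * h) := by
  have hz : (0:ℝ) ≤ (2 * m + 2) * h - z := by linarith
  rw [F, inner_eq, vol2 hh m h1 h2, ENNReal.toReal_ofReal hz]
  ring_nf

noncomputable def G (q h : ℝ) (z : ℝ) : ℝ :=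
  z ^ (-q) * (2 * h * ⌊z / (2 * h)⌋ + 2 * max 0 (z - 2 * h * ⌊z / (2 * h)⌋ - h))

lemma measurable_G (q h : ℝ) : Measurable (G q h) := by
  have hfl : Measurable fun z : ℝ => ((⌊z / (2 * h)⌋ : ℤ) : ℝ) := by
    have : Measurable fun z : ℝ => ⌊z / (2 * h)⌋ :=
      Int.measurable_floor.comp (measurable_id.div_const _)
    exact (measurable_from_top).comp this
  have h1 : Measurable fun z : ℝ => z ^ (-q) := by
    measurability
  exact h1.mul (((measurable_const.mul hfl)).add
    ((measurable_const.mul (measurable_const.max ((measurable_id.sub (measurable_const.mul hfl)).sub measurable_const)))))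

lemma floor_bounds {h z : ℝ} (hh : 0 < h) (hz : 0 < z) :
    0 ≤ ⌊z / (2 * h)⌋ ∧ 2 * h * ⌊z / (2 * h)⌋ ≤ z ∧ z < 2 * h * ⌊z / (2 * h)⌋ + 2 * h := by
  have h2 : (0:ℝ) < 2 * h := by linarith
  refine ⟨Int.floor_nonneg.mpr (by positivity), ?_, ?_⟩
  · have := Int.floor_le (z / (2 * h))
    calc 2 * h * ⌊z / (2 * h)⌋ ≤ 2 * h * (z / (2 * h)) := by nlinarith
      _ = z := by field_simp
  · have := Int.lt_floor_add_one (z / (2 * h))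
    have : z / (2 * h) < ⌊z / (2 * h)⌋ + 1 := this
    calc z = 2 * h * (z / (2 * h)) := by field_simp
      _ < 2 * h * (⌊z / (2 * h)⌋ + 1) := by nlinarith
      _ = 2 * h * ⌊z / (2 * h)⌋ + 2 * h := by ring

lemma G_nonneg {q h : ℝ} (hh : 0 < h) {z : ℝ} (hz : 0 < z) : 0 ≤ G q h z := by
  obtain ⟨h0, h1, h2⟩ := floor_bounds hh hz
  have hf : (0:ℝ) ≤ ⌊z / (2 * h)⌋ := by exact_mod_cast h0
  have hr : (0:ℝ) ≤ z ^ (-q) := Real.rpow_nonneg hz.le _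
  have hm : (0:ℝ) ≤ max 0 (z - 2 * h * ⌊z / (2 * h)⌋ - h) := le_max_left _ _
  apply mul_nonneg hr
  positivity

lemma G_le {q h : ℝ} (hh : 0 < h) {z : ℝ} (hz : 0 < z) : G q h z ≤ z ^ (1 - q) := by
  obtain ⟨h0, h1, h2⟩ := floor_bounds hh hz
  have hpsi : 2 * h * ⌊z / (2 * h)⌋ + 2 * max 0 (z - 2 * h * ⌊z / (2 * h)⌋ - h) ≤ z := by
    rcases max_cases 0 (z - 2 * h * ⌊z / (2 * h)⌋ - h) with ⟨he, hle⟩ | ⟨he, hle⟩ <;>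
      rw [he] <;> linarith
  have hrq : (0:ℝ) ≤ z ^ (-q) := Real.rpow_nonneg hz.le _
  calc G q h z ≤ z ^ (-q) * z := mul_le_mul_of_nonneg_left hpsi hrq
    _ = z ^ (1 - q) := by
        rw [show (1 - q) = -q + 1 by ring, Real.rpow_add hz, Real.rpow_one]

lemma G_zero_of_le {q h : ℝ} (hh : 0 < h) {z : ℝ} (hz1 : 0 < z) (hz2 : z ≤ h) : G q h z = 0 := by
  have hfl : ⌊z / (2 * h)⌋ = 0 := by
    rw [Int.floor_eq_zero_iff]
    constructor
    · positivity
    · rw [div_lt_one (by linarith)]; linarith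
  rw [G, hfl]
  have : max 0 (z - 2 * h * ((0:ℤ):ℝ) - h) = 0 := max_eq_left (by push_cast; linarith)
  rw [this]
  push_cast
  ring

lemma F_eq_G {q h : ℝ} (hh : 0 < h) {z : ℝ} (hz : 0 < z) : F q h z = G q h z := by
  obtain ⟨h0, h1, h2⟩ := floor_bounds hh hz
  set mi : ℤ := ⌊z / (2 * h)⌋ with hmi
  set m : ℕ := mi.toNat with hm
  have hcast : ((m : ℕ) : ℝ) = (mi : ℝ) := by
    rw [hm]
    have := Int.toNat_of_nonneg h0
    exact_mod_cast congrArg (fun i : ℤ => (i : ℝ)) this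
  rcases le_or_gt z ((2 * m + 1) * h) with hc | hc
  · rw [F1 hh m (by rw [hcast]; linarith) hc, G, ← hmi]
    have hmax : max 0 (z - 2 * h * (mi:ℝ) - h) = 0 := by
      apply max_eq_left
      have : ((m:ℕ):ℝ) = (mi:ℝ) := hcast
      nlinarith [hc, this]
    rw [hmax, hcast]
    ring
  · rw [F2 hh m (by rw [hcast] at hc ⊢; linarith) (by rw [hcast]; linarith), G, ← hmi]
    have hmax : max 0 (z - 2 * h * (mi:ℝ) - h) = z - 2 * h * (mi:ℝ) - h := by
      apply max_eq_right
      nlinarith [hc, hcast]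
    rw [hmax, hcast]
    ring

lemma integrableOn_G {q h : ℝ} (hq : 3 < q) (hh : 0 < h) : IntegrableOn (G q h) (Ioi 0) := by
  have hsplit : Ioi (0:ℝ) = Ioc 0 h ∪ Ioi h := (Ioc_union_Ioi_eq_Ioi hh.le).symm
  rw [hsplit]
  apply IntegrableOn.union
  · apply (integrableOn_zero (s := Ioc (0:ℝ) h)).congr_fun
    · intro z hz
      exact (G_zero_of_le hh hz.1 hz.2).symm
    · exact measurableSet_Ioc
  · have hint : IntegrableOn (fun z : ℝ => z ^ (1 - q)) (Ioi h) :=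
      integrableOn_Ioi_rpow_of_lt (by linarith) hh
    apply Integrable.mono' hint ((measurable_G q h).aestronglyMeasurable)
    filter_upwards [ae_restrict_mem measurableSet_Ioi] with z hz
    have hz0 : (0:ℝ) < z := lt_trans hh hz
    rw [Real.norm_eq_abs, abs_of_nonneg (G_nonneg hh hz0)]
    exact G_le hh hz0

lemma integrableOn_F {q h : ℝ} (hq : 3 < q) (hh : 0 < h) : IntegrableOn (F q h) (Ioi 0) := by
  apply (integrableOn_G hq hh).congr_fun
  · intro z hz
    exact (F_eq_G hh hz).symm
  · exact measurableSet_Ioi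

/-- union decomposition of Ioi 0 -/
lemma iUnion_pieces {h : ℝ} (hh : 0 < h) :
    (⋃ m : ℕ, Ioc (2 * m * h) ((2 * m + 2) * h)) = Ioi (0:ℝ) := by
  ext z
  simp only [mem_iUnion, mem_Ioc, mem_Ioi]
  constructor
  · rintro ⟨m, hm1, hm2⟩
    have : (0:ℝ) ≤ 2 * m * h := by positivity
    linarith
  · intro hz
    have h2 : (0:ℝ) < 2 * h := by linarith
    set n : ℕ := ⌈z / (2 * h)⌉₊ with hn
    have hn1 : 1 ≤ n := Nat.one_le_iff_ne_zero.mpr (by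
      intro h0
      have : ⌈z / (2 * h)⌉₊ ≠ 0 := Nat.pos_iff_ne_zero.mp (Nat.ceil_pos.mpr (by positivity))
      exact this h0)
    refine ⟨n - 1, ?_, ?_⟩
    · have hlt : ((n - 1 : ℕ) : ℝ) < z / (2 * h) := by
        apply Nat.lt_ceil.mp
        omega
      have hcast : ((n - 1 : ℕ) : ℝ) = (n : ℝ) - 1 := by
        push_cast [Nat.cast_sub hn1]; ring
      calc 2 * ((n-1:ℕ):ℝ) * h = 2 * h * ((n-1:ℕ):ℝ) := by ring
        _ < 2 * h * (z / (2*h)) := by nlinarith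
        _ = z := by field_simp
    · have hle : z / (2 * h) ≤ (n : ℝ) := Nat.le_ceil _
      have hcast : ((n - 1 : ℕ) : ℝ) = (n : ℝ) - 1 := by
        push_cast [Nat.cast_sub hn1]; ring
      calc z = 2 * h * (z / (2*h)) := by field_simp
        _ ≤ 2 * h * (n:ℝ) := by nlinarith
        _ = (2 * ((n-1:ℕ):ℝ) + 2) * h := by rw [hcast]; ring

lemma integral_piece_1 {q h : ℝ} (hq : 3 < q) (hh : 0 < h) (m : ℕ) :
    ∫ z in Ioc (2 * m * h) ((2 * m + 1) * h), F q h z =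
      2 * m * h * (((2 * m + 1) * h) ^ (1 - q) - (2 * m * h) ^ (1 - q)) / (1 - q) := by
  have hab : (2 * (m:ℝ) * h) ≤ (2 * m + 1) * h := by nlinarith [Nat.cast_nonneg (α := ℝ) m]
  rcases Nat.eq_zero_or_pos m with hm | hm
  · subst hm
    have h1 : ∫ z in Ioc (2 * (0:ℕ) * h) ((2 * (0:ℕ) + 1) * h), F q h z = 0 := by
      rw [show (∫ z in Ioc (2 * ((0:ℕ):ℝ) * h) ((2 * ((0:ℕ):ℝ) + 1) * h), F q h z) =
          ∫ z in Ioc (2 * ((0:ℕ):ℝ) * h) ((2 * ((0:ℕ):ℝ) + 1) * h), (0:ℝ) from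
        setIntegral_congr_fun measurableSet_Ioc (fun z hz => by
          rw [F1 hh 0 (le_of_lt hz.1) hz.2]; push_cast; ring)]
      simp
    rw [h1]
    push_cast
    ring
  · have hm0 : (0:ℝ) < 2 * m * h := by
      have : (1:ℝ) ≤ m := by exact_mod_cast hm
      nlinarith
    have hcongr : ∫ z in Ioc (2 * (m:ℝ) * h) ((2 * m + 1) * h), F q h z =
        ∫ z in Ioc (2 * (m:ℝ) * h) ((2 * m + 1) * h), (2 * m * h) * z ^ (-q) :=
      setIntegral_congr_fun measurableSet_Ioc (fun z hz => by
        rw [F1 hh m (le_of_lt hz.1) hz.2]; ring)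
    rw [hcongr, ← intervalIntegral.integral_of_le hab, intervalIntegral.integral_const_mul,
      integral_rpow (Or.inr ⟨by intro hcon; linarith [hcon], by
        intro hmem
        rw [Set.uIcc_of_le hab] at hmem
        linarith [hmem.1]⟩)]
    rw [show -q + 1 = 1 - q by ring]
    ring

lemma integral_piece_2 {q h : ℝ} (hq : 3 < q) (hh : 0 < h) (m : ℕ) :
    ∫ z in Ioc ((2 * m + 1) * h) ((2 * m + 2) * h), F q h z =
      2 * (((2 * m + 2) * h) ^ (2 - q) - ((2 * m + 1) * h) ^ (2 - q)) / (2 - q) -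
        (2 * m + 2) * h * (((2 * m + 2) * h) ^ (1 - q) - ((2 * m + 1) * h) ^ (1 - q)) / (1 - q) := by
  have hm0 : (0:ℝ) ≤ m := Nat.cast_nonneg m
  have ha : (0:ℝ) < (2 * m + 1) * h := by nlinarith
  have hab : ((2 * (m:ℝ) + 1) * h) ≤ (2 * m + 2) * h := by nlinarith
  have hmem : (0:ℝ) ∉ Set.uIcc ((2 * (m:ℝ) + 1) * h) ((2 * m + 2) * h) := by
    rw [Set.uIcc_of_le hab]
    intro hmem
    linarith [hmem.1]
  have hcongr : ∫ z in Ioc ((2 * (m:ℝ) + 1) * h) ((2 * m + 2) * h), F q h z =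
      ∫ z in Ioc ((2 * (m:ℝ) + 1) * h) ((2 * m + 2) * h),
        (2 * z ^ (1 - q) - ((2 * m + 2) * h) * z ^ (-q)) :=
    setIntegral_congr_fun measurableSet_Ioc (fun z hz => by
      have hz0 : (0:ℝ) < z := lt_trans ha hz.1
      rw [F2 hh m (le_of_lt hz.1) hz.2]
      have : z ^ (1 - q) = z ^ (-q) * z := by
        rw [show (1 - q) = -q + 1 by ring, Real.rpow_add hz0, Real.rpow_one]
      rw [this]; ring)
  have hi1 : IntervalIntegrable (fun z : ℝ => z ^ (1 - q)) volume
      ((2 * (m:ℝ) + 1) * h) ((2 * m + 2) * h) :=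
    intervalIntegral.intervalIntegrable_rpow (Or.inr hmem)
  have hi2 : IntervalIntegrable (fun z : ℝ => z ^ (-q)) volume
      ((2 * (m:ℝ) + 1) * h) ((2 * m + 2) * h) :=
    intervalIntegral.intervalIntegrable_rpow (Or.inr hmem)
  rw [hcongr, ← intervalIntegral.integral_of_le hab]
  rw [intervalIntegral.integral_sub ((hi1.const_mul 2)) (hi2.const_mul _),
    intervalIntegral.integral_const_mul, intervalIntegral.integral_const_mul,
    integral_rpow (Or.inr ⟨by intro hcon; linarith, hmem⟩),
    integral_rpow (Or.inr ⟨by intro hcon; linarith [hcon], hmem⟩)]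
  rw [show 1 - q + 1 = 2 - q by ring, show -q + 1 = 1 - q by ring]
  ring

/-- per-piece value in terms of v_j = j^(2-q) -/
lemma piece_val {q h : ℝ} (hq : 3 < q) (hh : 0 < h) (m : ℕ) :
    ∫ z in Ioc (2 * m * h) ((2 * m + 2) * h), F q h z =
      h ^ (2 - q) * ((2 * ((2 * m + 1 : ℕ) : ℝ) ^ (2 - q) - ((2 * m : ℕ) : ℝ) ^ (2 - q)
          - ((2 * m + 2 : ℕ) : ℝ) ^ (2 - q)) / (1 - q) +
        2 * (((2 * m + 2 : ℕ) : ℝ) ^ (2 - q) - ((2 * m + 1 : ℕ) : ℝ) ^ (2 - q)) / (2 - q)) := by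
  have hm0 : (0:ℝ) ≤ m := Nat.cast_nonneg m
  have hab : (2 * (m:ℝ) * h) ≤ (2 * m + 1) * h := by nlinarith
  have hbc : ((2 * (m:ℝ) + 1) * h) ≤ (2 * m + 2) * h := by nlinarith
  have hsub1 : Ioc (2 * (m:ℝ) * h) ((2 * m + 1) * h) ⊆ Ioi 0 := fun z hz => by
    have : (0:ℝ) ≤ 2 * m * h := by positivity
    exact lt_of_le_of_lt this hz.1
  have hsub2 : Ioc ((2 * (m:ℝ) + 1) * h) ((2 * m + 2) * h) ⊆ Ioi 0 := fun z hz => by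
    have : (0:ℝ) ≤ (2 * m + 1) * h := by positivity
    exact lt_of_le_of_lt this hz.1
  have hsplit : Ioc (2 * (m:ℝ) * h) ((2 * m + 2) * h) =
      Ioc (2 * (m:ℝ) * h) ((2 * m + 1) * h) ∪ Ioc ((2 * (m:ℝ) + 1) * h) ((2 * m + 2) * h) :=
    (Ioc_union_Ioc_eq_Ioc hab hbc).symm
  rw [hsplit, setIntegral_union (Set.Ioc_disjoint_Ioc.mpr (min_le_of_left_le (le_max_right _ _))) measurableSet_Ioc
    ((integrableOn_F hq hh).mono_set hsub1) ((integrableOn_F hq hh).mono_set hsub2),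
    integral_piece_1 hq hh m, integral_piece_2 hq hh m]
  have key : ∀ x : ℝ, 0 ≤ x → x * x ^ (1 - q) = x ^ (2 - q) := by
    intro x hx
    rcases hx.eq_or_lt with hx0 | hx0
    · rw [← hx0, Real.zero_rpow (by intro hcon; linarith [hcon]),
        Real.zero_rpow (by intro hcon; linarith [hcon])]
      ring
    · rw [show (2 - q) = 1 + (1 - q) by ring, Real.rpow_add hx0, Real.rpow_one]
  have hA := key (2 * (m:ℝ)) (by positivity)
  have hB := key (2 * (m:ℝ) + 1) (by positivity)
  have hC := key (2 * (m:ℝ) + 2) (by positivity)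
  have hH := key h hh.le
  push_cast
  simp only [Real.mul_rpow (show (0:ℝ) ≤ 2 * (m:ℝ) by positivity) hh.le,
    Real.mul_rpow (show (0:ℝ) ≤ 2 * (m:ℝ) + 1 by positivity) hh.le,
    Real.mul_rpow (show (0:ℝ) ≤ 2 * (m:ℝ) + 2 by positivity) hh.le]
  rw [← hA, ← hB, ← hC, ← hH]
  ring

/-- the summation -/
lemma sum_val {q : ℝ} (hq : 3 < q) :
    ∑' m : ℕ, ((2 * ((2 * m + 1 : ℕ) : ℝ) ^ (2 - q) - ((2 * m : ℕ) : ℝ) ^ (2 - q)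
          - ((2 * m + 2 : ℕ) : ℝ) ^ (2 - q)) / (1 - q) +
        2 * (((2 * m + 2 : ℕ) : ℝ) ^ (2 - q) - ((2 * m + 1 : ℕ) : ℝ) ^ (2 - q)) / (2 - q)) =
      2 * (1 - 2 ^ (-(q - 3))) / ((q - 2) * (q - 1)) * (∑' k : ℕ+, (k : ℝ) ^ (-(q - 2))) := by
  have h2q : (2:ℝ) - q < -1 := by linarith
  have hq1 : (1:ℝ) - q ≠ 0 := by intro hcon; linarith
  have hq2 : (2:ℝ) - q ≠ 0 := by intro hcon; linarith
  set f : ℕ → ℝ := fun n => ((n:ℕ):ℝ) ^ (2 - q) with hf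
  have hs : Summable f := Real.summable_nat_rpow.mpr h2q
  have sA : Summable (fun m : ℕ => f (2 * m + 1)) :=
    hs.comp_injective (fun a b hab => by omega)
  have sB : Summable (fun m : ℕ => f (2 * m)) :=
    hs.comp_injective (fun a b hab => by omega)
  have sC : Summable (fun m : ℕ => f (2 * m + 2)) :=
    hs.comp_injective (fun a b hab => by omega)
  have hf0 : f 0 = 0 := by
    simp only [hf, Nat.cast_zero]
    exact Real.zero_rpow hq2
  set S : ℝ := ∑' k : ℕ+, ((k : ℕ) : ℝ) ^ (2 - q) with hSdef
  have hshift : ∑' n : ℕ, f (n + 1) = S := by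
    rw [hSdef, ← Equiv.pnatEquivNat.symm.tsum_eq (fun k : ℕ+ => ((k : ℕ) : ℝ) ^ (2 - q))]
    exact tsum_congr (fun n => rfl)
  have hT : ∑' n : ℕ, f n = S := by
    rw [Summable.tsum_eq_zero_add hs, hf0, zero_add, hshift]
  have hEO : ∑' m : ℕ, f (2 * m) + ∑' m : ℕ, f (2 * m + 1) = S := by
    rw [tsum_even_add_odd sB sA, hT]
  have hBC : ∑' m : ℕ, f (2 * m) = ∑' m : ℕ, f (2 * m + 2) := by
    rw [Summable.tsum_eq_zero_add sB, Nat.mul_zero, hf0, zero_add]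
    exact tsum_congr (fun m => congrArg f (by omega))
  have hC2 : ∑' m : ℕ, f (2 * m + 2) = 2 ^ ((2:ℝ) - q) * S := by
    have : ∀ m : ℕ, f (2 * m + 2) = 2 ^ ((2:ℝ) - q) * f (m + 1) := by
      intro m
      simp only [hf]
      rw [show ((2 * m + 2 : ℕ) : ℝ) = 2 * ((m + 1 : ℕ) : ℝ) by push_cast; ring,
        Real.mul_rpow (by norm_num) (by positivity)]
    rw [tsum_congr this, tsum_mul_left, hshift]
  set c1 : ℝ := 2 / (1 - q) - 2 / (2 - q) with hc1
  set c2 : ℝ := -(1 / (1 - q)) with hc2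
  set c3 : ℝ := 2 / (2 - q) - 1 / (1 - q) with hc3
  have hterm : ∀ m : ℕ,
      ((2 * ((2 * m + 1 : ℕ) : ℝ) ^ (2 - q) - ((2 * m : ℕ) : ℝ) ^ (2 - q)
          - ((2 * m + 2 : ℕ) : ℝ) ^ (2 - q)) / (1 - q) +
        2 * (((2 * m + 2 : ℕ) : ℝ) ^ (2 - q) - ((2 * m + 1 : ℕ) : ℝ) ^ (2 - q)) / (2 - q)) =
      c1 * f (2 * m + 1) + (c2 * f (2 * m) + c3 * f (2 * m + 2)) := by
    intro m
    simp only [hf, hc1, hc2, hc3]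
    field_simp
    ring
  rw [tsum_congr hterm,
    Summable.tsum_add (sA.mul_left c1) ((sB.mul_left c2).add (sC.mul_left c3)),
    Summable.tsum_add (sB.mul_left c2) (sC.mul_left c3),
    tsum_mul_left, tsum_mul_left, tsum_mul_left]
  have hA : ∑' m : ℕ, f (2 * m + 1) = S - 2 ^ ((2:ℝ) - q) * S := by
    have := hEO
    rw [hBC, hC2] at this
    linarith
  rw [hA, hBC, hC2]
  have h23 : (2:ℝ) ^ (-(q - 3)) = 2 * 2 ^ ((2:ℝ) - q) := by
    rw [show -(q - 3) = 1 + (2 - q) by ring, Real.rpow_add (by norm_num), Real.rpow_one]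
  have hSS : (∑' k : ℕ+, (k : ℝ) ^ (-(q - 2))) = S := by
    rw [hSdef]
    exact tsum_congr (fun k => by rw [show -(q - 2) = 2 - q by ring])
  rw [h23, hSS, hc1, hc2, hc3]
  have hq3 : (q:ℝ) - 1 ≠ 0 := by intro hcon; linarith
  have hq4 : (q:ℝ) - 2 ≠ 0 := by intro hcon; linarith
  field_simp
  ring

end Stmt15

theorem stmt_15 (q h : ℝ) (hq : 3 < q) (hh : 0 < h) :
    let E : Set ℝ := ⋃ k : ℤ, Icc (2 * k * h) ((2 * k + 1) * h)
    (∫ z in Ioi (0 : ℝ), z ^ (-q) *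
        (z - ∫ x in Ioc (0 : ℝ) h, Eᶜ.indicator (fun _ => (1 : ℝ)) (x + z))) =
      2 * (1 - 2 ^ (-(q - 3))) / ((q - 2) * (q - 1)) *
        (∑' k : ℕ+, (k : ℝ) ^ (-(q - 2))) * h ^ (-(q - 2)) := by
  intro E
  have hE : E = Stmt15.Es h := rfl
  have key : (∫ z in Ioi (0:ℝ), Stmt15.F q h z) =
      2 * (1 - 2 ^ (-(q - 3))) / ((q - 2) * (q - 1)) *
        (∑' k : ℕ+, (k : ℝ) ^ (-(q - 2))) * h ^ (-(q - 2)) := by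
    have hdisj : Pairwise (Function.onFun Disjoint
        (fun m : ℕ => Ioc (2 * (m:ℝ) * h) ((2 * m + 2) * h))) := by
      intro i j hij
      dsimp [Function.onFun]
      rw [Set.Ioc_disjoint_Ioc]
      rcases hij.lt_or_gt with hlt | hlt
      · have hij' : ((i:ℝ)) + 1 ≤ j := by exact_mod_cast hlt
        calc min ((2 * (i:ℝ) + 2) * h) ((2 * (j:ℝ) + 2) * h) ≤ (2 * (i:ℝ) + 2) * h :=
              min_le_left _ _
          _ ≤ 2 * (j:ℝ) * h := by nlinarith
          _ ≤ max (2 * (i:ℝ) * h) (2 * (j:ℝ) * h) := le_max_right _ _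
      · have hij' : ((j:ℝ)) + 1 ≤ i := by exact_mod_cast hlt
        calc min ((2 * (i:ℝ) + 2) * h) ((2 * (j:ℝ) + 2) * h) ≤ (2 * (j:ℝ) + 2) * h :=
              min_le_right _ _
          _ ≤ 2 * (i:ℝ) * h := by nlinarith
          _ ≤ max (2 * (i:ℝ) * h) (2 * (j:ℝ) * h) := le_max_left _ _
    rw [← Stmt15.iUnion_pieces hh,
      integral_iUnion (fun m => measurableSet_Ioc) hdisj
        (by rw [Stmt15.iUnion_pieces hh]; exact Stmt15.integrableOn_F hq hh),
      tsum_congr (fun m => Stmt15.piece_val hq hh m), tsum_mul_left,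
      Stmt15.sum_val hq, show -(q - 2) = 2 - q from by ring]
    ring
  rw [hE]
  exact key
end
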